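/- arXiv:1510.06435 — 6 statements merged into one kernel-verified Lean document; each statement's English description precedes it below -/
import Mathlib

section
/- Let α, β₁, β₂, γ₁, γ₂, z₁, z₂ be complex numbers with Re γ₁ > Re β₁ > 0, Re γ₂ > Re β₂ > 0 and |z₁| + |z₂| < 1. Then F₂(α; β₁, β₂; γ₁, γ₂; z₁, z₂) = Γ(γ₁)Γ(γ₂) / (Γ(β₁)Γ(β₂)Γ(γ₁−β₁)Γ(γ₂−β₂)) · ∫₀¹ ∫₀¹ u^{β₂−1} (1−u)^{γ₂−β₂−1} x^{β₁−1} (1−x)^{γ₁−β₁−1} (1 − z₁x − z₂u)^{−α} dx du, where all complex powers are principal branch powers (well defined since Re(1 − z₁x − z₂u) > 0 for x, u ∈ [0,1]). -/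
open Complex MeasureTheory

/-- Pochhammer symbol `(x)_n` in `ℂ`. -/
noncomputable def cpoch (x : ℂ) (n : ℕ) : ℂ := (ascPochhammer ℂ n).eval x

/-- Appell's hypergeometric series `F₂`. -/
noncomputable def appellF2 (a b₁ b₂ c₁ c₂ z₁ z₂ : ℂ) : ℂ :=
  ∑' p : ℕ × ℕ, cpoch a (p.1 + p.2) * cpoch b₁ p.1 * cpoch b₂ p.2 /
    (cpoch c₁ p.1 * cpoch c₂ p.2 * (p.1.factorial : ℂ) * (p.2.factorial : ℂ)) *
    z₁ ^ p.1 * z₂ ^ p.2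

/-!
Expand `(1 - z₁x - z₂u)^(-α)` by the binomial series in `z₁x + z₂u` and split each power by the
binomial theorem: this gives the absolutely convergent double series
`∑ (α)_{m+n} / (m! n!) (z₁x)^m (z₂u)^n`, dominated by the same series at `(‖z₁‖, ‖z₂‖)` since
`x, u ∈ (0, 1)`. Integrating term by term, first in `x` and then in `u`, each monomial produces
Beta integrals `B(β + m, γ - β) = Γ(β) Γ(γ - β) / Γ(γ) · (β)_m / (γ)_m`, and the Gamma factors
cancel against the prefactor, leaving the coefficients of `F₂`.
-/

open Finset Set Nat

theorem ringChoose_add_sub_one_eq_cpoch_div_factorial (a : ℂ) (n : ℕ) :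
    Ring.choose (a + n - 1) n = cpoch a n / n ! := by
  rw [eq_div_iff (by exact_mod_cast n.factorial_ne_zero), ← Ring.multichoose_eq, cpoch,
    ← Polynomial.ascPochhammer_smeval_eq_eval,
    ← Ring.factorial_nsmul_multichoose_eq_ascPochhammer, nsmul_eq_mul, mul_comm]

theorem hasSum_cpoch_div_factorial_mul_pow (α : ℂ) {w : ℂ} (hw : ‖w‖ < 1) :
    HasSum (fun k ↦ cpoch α k / k ! * w ^ k) ((1 - w) ^ (-α)) := by
  have := (one_div_one_sub_cpow_hasFPowerSeriesOnBall_zero α).hasSum (y := w)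
    (by rwa [Metric.mem_eball, edist_zero_right, ← ofReal_norm, ENNReal.ofReal_lt_one])
  simpa [FormalMultilinearSeries.ofScalars_apply_eq, ringChoose_add_sub_one_eq_cpoch_div_factorial,
    cpow_neg, mul_comm] using this

theorem summable_norm_cpoch_div_factorial_mul_pow (α : ℂ) {t : ℝ} (ht₀ : 0 ≤ t) (ht : t < 1) :
    Summable (fun k ↦ ‖cpoch α k‖ / k ! * t ^ k) := by
  have := FormalMultilinearSeries.summable_norm_apply _ (x := (t : ℂ))
    ((one_div_one_sub_cpow_hasFPowerSeriesOnBall_zero α).r_le.trans_lt'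
      (by rwa [edist_zero_right, ← ofReal_norm, ENNReal.ofReal_lt_one, norm_real,
        Real.norm_of_nonneg ht₀]))
  simpa [FormalMultilinearSeries.ofScalars_apply_eq, ringChoose_add_sub_one_eq_cpoch_div_factorial,
    abs_of_nonneg ht₀, mul_comm] using this

theorem sum_antidiagonal_div_factorial_mul_pow_mul_pow {K : Type*} [Field K] [CharZero K]
    (c : ℕ → K) (a b : K) (n : ℕ) :
    ∑ p ∈ antidiagonal n, c (p.1 + p.2) / (p.1 ! * p.2 !) * a ^ p.1 * b ^ p.2 =
      c n / n ! * (a + b) ^ n := by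
  rw [← Finset.Nat.sum_antidiagonal_subst
    (f := fun p n ↦ c n / (p.1 ! * p.2 !) * a ^ p.1 * b ^ p.2), add_pow, Finset.mul_sum,
    Finset.Nat.sum_antidiagonal_eq_sum_range_succ_mk]
  refine Finset.sum_congr rfl fun i hi ↦ ?_
  rw [Nat.cast_choose K (Nat.lt_succ_iff.mp (Finset.mem_range.mp hi))]
  have : (n ! : K) ≠ 0 := by exact_mod_cast n.factorial_ne_zero
  field_simp

theorem HasSum.sum_antidiagonal {M : Type*} [AddCommMonoid M] [TopologicalSpace M]
    [ContinuousAdd M] [RegularSpace M] {f : ℕ × ℕ → M} {a : M} (hf : HasSum f a) :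
    HasSum (fun n ↦ ∑ p ∈ antidiagonal n, f p) a := by
  refine (HasAntidiagonal.sigmaAntidiagonalEquivProd.hasSum_iff.mpr hf).sigma fun n ↦ ?_
  simpa [Finset.sum_attach] using hasSum_fintype (fun p : antidiagonal n ↦ f p)

theorem summable_of_summable_sum_antidiagonal {f : ℕ × ℕ → ℝ} (hf : 0 ≤ f)
    (h : Summable fun n ↦ ∑ p ∈ antidiagonal n, f p) : Summable f := by
  rw [← HasAntidiagonal.sigmaAntidiagonalEquivProd.summable_iff]
  refine (summable_sigma_of_nonneg fun _ ↦ hf _).mpr ⟨fun _ ↦ .of_finite, ?_⟩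
  simpa [tsum_fintype, Finset.sum_attach] using h

theorem summable_norm_cpoch_add_div_factorial_mul_pow_mul_pow (α : ℂ) {r s : ℝ} (hr : 0 ≤ r)
    (hs : 0 ≤ s) (h : r + s < 1) :
    Summable fun p : ℕ × ℕ ↦ ‖cpoch α (p.1 + p.2)‖ / (p.1 ! * p.2 !) * r ^ p.1 * s ^ p.2 := by
  refine summable_of_summable_sum_antidiagonal (fun p ↦ by positivity) ?_
  simp_rw [sum_antidiagonal_div_factorial_mul_pow_mul_pow (fun k ↦ ‖cpoch α k‖)]
  exact summable_norm_cpoch_div_factorial_mul_pow α (by positivity) h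

theorem hasSum_cpoch_add_div_factorial_mul_pow_mul_pow (α : ℂ) {a b : ℂ} (h : ‖a‖ + ‖b‖ < 1) :
    HasSum (fun p : ℕ × ℕ ↦ cpoch α (p.1 + p.2) / (p.1 ! * p.2 !) * a ^ p.1 * b ^ p.2)
      ((1 - a - b) ^ (-α)) := by
  have hsum : Summable fun p : ℕ × ℕ ↦ cpoch α (p.1 + p.2) / (p.1 ! * p.2 !) * a ^ p.1 * b ^ p.2 :=
    .of_norm <| by
      simpa [norm_mul, norm_div, norm_pow] using
        summable_norm_cpoch_add_div_factorial_mul_pow_mul_pow α (norm_nonneg a) (norm_nonneg b) h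
  have hdiag := hsum.hasSum.sum_antidiagonal
  simp_rw [sum_antidiagonal_div_factorial_mul_pow_mul_pow (cpoch α)] at hdiag
  rw [sub_sub, (hasSum_cpoch_div_factorial_mul_pow α ((norm_add_le a b).trans_lt h)).unique hdiag]
  exact hsum.hasSum

theorem integral_mul_tsum_of_norm_le {α ι 𝕜 : Type*} [MeasurableSpace α] {μ : Measure α}
    [RCLike 𝕜] [Countable ι] {f : α → 𝕜} {g : ι → α → 𝕜} {C : ι → ℝ} (hf : Integrable f μ)
    (hg : ∀ i, AEStronglyMeasurable (g i) μ) (hgC : ∀ i, ∀ᵐ x ∂μ, ‖g i x‖ ≤ C i)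
    (hC : Summable C) :
    ∫ x, f x * ∑' i, g i x ∂μ = ∑' i, ∫ x, f x * g i x ∂μ := by
  have hint i : Integrable (fun x ↦ f x * g i x) μ := hf.mul_bdd (hg i) (hgC i)
  have hle i : ∫ x, ‖f x * g i x‖ ∂μ ≤ C i * ∫ x, ‖f x‖ ∂μ := by
    rw [← integral_const_mul]
    refine integral_mono_ae (hint i).norm (hf.norm.const_mul _) ?_
    filter_upwards [hgC i] with x hx
    rw [norm_mul, mul_comm]
    exact mul_le_mul_of_nonneg_right hx (norm_nonneg _)
  simp_rw [← tsum_mul_left]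
  exact (integral_tsum_of_summable_integral_norm hint <|
    .of_nonneg_of_le (fun i ↦ integral_nonneg fun _ ↦ norm_nonneg _) hle (hC.mul_right _)).symm

theorem integrableOn_betaIntegrand {u v : ℂ} (hu : 0 < u.re) (hv : 0 < v.re) :
    IntegrableOn (fun x : ℝ ↦ (x : ℂ) ^ (u - 1) * (1 - (x : ℂ)) ^ (v - 1)) (Ioo 0 1) :=
  (intervalIntegrable_iff_integrableOn_Ioo_of_le zero_le_one).mp (betaIntegral_convergent hu hv)

theorem setIntegral_Ioo_betaIntegrand (u v : ℂ) :
    ∫ x in Ioo (0 : ℝ) 1, (x : ℂ) ^ (u - 1) * (1 - (x : ℂ)) ^ (v - 1) = betaIntegral u v := by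
  rw [betaIntegral, intervalIntegral.integral_of_le zero_le_one, integral_Ioc_eq_integral_Ioo]

theorem ofReal_cpow_sub_one_mul_pow {x : ℝ} (hx : 0 < x) (u : ℂ) (m : ℕ) :
    (x : ℂ) ^ (u - 1) * (x : ℂ) ^ m = (x : ℂ) ^ (u + m - 1) := by
  rw [← cpow_natCast, ← cpow_add _ _ (ofReal_ne_zero.mpr hx.ne'), sub_add_eq_add_sub]

theorem integral_betaIntegrand_mul_tsum {ι : Type*} [Countable ι] {u v : ℂ} (hu : 0 < u.re)
    (hv : 0 < v.re) {a : ι → ℂ} (ha : Summable (‖a ·‖)) (n : ι → ℕ) :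
    ∫ x in Ioo (0 : ℝ) 1, (x : ℂ) ^ (u - 1) * (1 - (x : ℂ)) ^ (v - 1) * ∑' i, a i * (x : ℂ) ^ n i =
      ∑' i, a i * betaIntegral (u + n i) v := by
  rw [integral_mul_tsum_of_norm_le (integrableOn_betaIntegrand hu hv)
    (fun i ↦ by fun_prop) (fun i ↦ ?_) ha]
  · refine tsum_congr fun i ↦ ?_
    rw [← setIntegral_Ioo_betaIntegrand, ← integral_const_mul]
    refine setIntegral_congr_fun measurableSet_Ioo fun x hx ↦ ?_
    rw [← ofReal_cpow_sub_one_mul_pow hx.1]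
    ring
  · refine (ae_restrict_iff' measurableSet_Ioo).mpr (.of_forall fun x hx ↦ ?_)
    rw [norm_mul, norm_pow, norm_real, Real.norm_of_nonneg hx.1.le]
    exact mul_le_of_le_one_right (norm_nonneg _) (pow_le_one₀ hx.1.le hx.2.le)

theorem norm_betaIntegral_add_nat_le {u v : ℂ} (hu : 0 < u.re) (hv : 0 < v.re) (m : ℕ) :
    ‖betaIntegral (u + m) v‖ ≤
      ∫ x in Ioo (0 : ℝ) 1, ‖(x : ℂ) ^ (u - 1) * (1 - (x : ℂ)) ^ (v - 1)‖ := by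
  have hum : 0 < (u + m).re := by simp only [add_re, natCast_re]; positivity
  rw [← setIntegral_Ioo_betaIntegrand]
  refine (norm_integral_le_integral_norm _).trans <| setIntegral_mono_on
    (integrableOn_betaIntegrand hum hv).norm (integrableOn_betaIntegrand hu hv).norm
    measurableSet_Ioo fun x hx ↦ ?_
  rw [norm_mul, norm_mul, norm_cpow_eq_rpow_re_of_pos hx.1, norm_cpow_eq_rpow_re_of_pos hx.1]
  refine mul_le_mul_of_nonneg_right
    (Real.rpow_le_rpow_of_exponent_ge hx.1 hx.2.le ?_) (norm_nonneg _)
  simp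

theorem Gamma_add_nat_eq_cpoch_mul {x : ℂ} (hx : 0 < x.re) (n : ℕ) :
    Gamma (x + n) = cpoch x n * Gamma x := by
  rw [cpoch, ← Gamma_add_nat_div_Gamma_eq x, div_mul_cancel₀ _ (Gamma_ne_zero_of_re_pos hx)]
  rintro k rfl
  simp only [neg_re, natCast_re, Left.neg_pos_iff] at hx
  linarith [k.cast_nonneg (α := ℝ)]

theorem Gamma_div_mul_betaIntegral_add_nat {b c : ℂ} (hb : 0 < b.re) (hcb : 0 < (c - b).re)
    (m : ℕ) :
    Gamma c / (Gamma b * Gamma (c - b)) * betaIntegral (b + m) (c - b) = cpoch b m / cpoch c m := by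
  have hc : 0 < c.re := by simp only [sub_re] at hcb; linarith
  have hbm : 0 < (b + m).re := by simp only [add_re, natCast_re]; positivity
  have hcm : cpoch c m * Gamma c ≠ 0 := by
    rw [← Gamma_add_nat_eq_cpoch_mul hc]
    exact Gamma_ne_zero_of_re_pos (by simp only [add_re, natCast_re]; positivity)
  have key := Gamma_mul_Gamma_eq_betaIntegral hbm hcb
  rw [show b + m + (c - b) = c + m by ring, Gamma_add_nat_eq_cpoch_mul hb,
    Gamma_add_nat_eq_cpoch_mul hc] at key
  obtain ⟨hpc, hΓc⟩ := mul_ne_zero_iff.mp hcm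
  have hΓb := Gamma_ne_zero_of_re_pos hb
  have hΓcb := Gamma_ne_zero_of_re_pos hcb
  field_simp
  linear_combination -key

theorem norm_mul_ofReal_le_norm (w : ℂ) {x : ℝ} (hx₀ : 0 ≤ x) (hx₁ : x ≤ 1) : ‖w * x‖ ≤ ‖w‖ := by
  rw [norm_mul, norm_real, Real.norm_of_nonneg hx₀]
  exact mul_le_of_le_one_right (norm_nonneg w) hx₁

theorem integral_betaIntegrand_mul_one_sub_cpow (α : ℂ) {u v : ℂ} (hu : 0 < u.re)
    (hv : 0 < v.re) {w y : ℂ} (h : ‖w‖ + ‖y‖ < 1) :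
    ∫ x in Ioo (0 : ℝ) 1, (x : ℂ) ^ (u - 1) * (1 - (x : ℂ)) ^ (v - 1) * (1 - w * x - y) ^ (-α) =
      ∑' p : ℕ × ℕ, cpoch α (p.1 + p.2) / (p.1 ! * p.2 !) * w ^ p.1 * y ^ p.2 *
        betaIntegral (u + p.1) v := by
  rw [← integral_betaIntegrand_mul_tsum hu hv (n := Prod.fst) (.of_norm ?_)]
  · refine setIntegral_congr_fun measurableSet_Ioo fun x hx ↦ ?_
    have hwx : ‖w * x‖ + ‖y‖ < 1 := by linarith [norm_mul_ofReal_le_norm w hx.1.le hx.2.le]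
    rw [(hasSum_cpoch_add_div_factorial_mul_pow_mul_pow α hwx).tsum_eq.symm]
    congr 1
    refine tsum_congr fun p ↦ ?_
    ring
  · simpa [norm_mul, norm_div, norm_pow] using
      summable_norm_cpoch_add_div_factorial_mul_pow_mul_pow α (norm_nonneg w) (norm_nonneg y) h

theorem summable_norm_cpoch_add_div_factorial_mul_pow_mul_pow_mul_betaIntegral (α : ℂ) {u v : ℂ}
    (hu : 0 < u.re) (hv : 0 < v.re) {w y : ℂ} (h : ‖w‖ + ‖y‖ < 1) :
    Summable fun p : ℕ × ℕ ↦
      ‖cpoch α (p.1 + p.2) / (p.1 ! * p.2 !) * w ^ p.1 * y ^ p.2 * betaIntegral (u + p.1) v‖ := by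
  refine .of_nonneg_of_le (fun _ ↦ norm_nonneg _) (fun p ↦ ?_)
    ((summable_norm_cpoch_add_div_factorial_mul_pow_mul_pow α (norm_nonneg w) (norm_nonneg y)
      h).mul_right (∫ x in Ioo (0 : ℝ) 1, ‖(x : ℂ) ^ (u - 1) * (1 - (x : ℂ)) ^ (v - 1)‖))
  rw [norm_mul]
  exact mul_le_mul (by simp) (norm_betaIntegral_add_nat_le hu hv p.1)
    (norm_nonneg _) (by positivity)

/-- Integral representation of Appell's `F₂`. -/
theorem statement0 (α β₁ β₂ γ₁ γ₂ z₁ z₂ : ℂ)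
    (hβ₁ : 0 < β₁.re) (hγ₁ : β₁.re < γ₁.re)
    (hβ₂ : 0 < β₂.re) (hγ₂ : β₂.re < γ₂.re)
    (hz : ‖z₁‖ + ‖z₂‖ < 1) :
    appellF2 α β₁ β₂ γ₁ γ₂ z₁ z₂ =
      Complex.Gamma γ₁ * Complex.Gamma γ₂ /
        (Complex.Gamma β₁ * Complex.Gamma β₂ * Complex.Gamma (γ₁ - β₁) *
          Complex.Gamma (γ₂ - β₂)) *
      ∫ u in Set.Ioo (0:ℝ) 1, ∫ x in Set.Ioo (0:ℝ) 1,
        (u : ℂ) ^ (β₂ - 1) * ((1 : ℂ) - u) ^ (γ₂ - β₂ - 1) *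
        (x : ℂ) ^ (β₁ - 1) * ((1 : ℂ) - x) ^ (γ₁ - β₁ - 1) *
        ((1 : ℂ) - z₁ * x - z₂ * u) ^ (-α) := by
  have hv₁ : 0 < (γ₁ - β₁).re := by rw [sub_re]; linarith
  have hv₂ : 0 < (γ₂ - β₂).re := by rw [sub_re]; linarith
  have hinner : ∀ u ∈ Ioo (0 : ℝ) 1, ∫ x in Ioo (0 : ℝ) 1,
      (u : ℂ) ^ (β₂ - 1) * ((1 : ℂ) - u) ^ (γ₂ - β₂ - 1) *
        (x : ℂ) ^ (β₁ - 1) * ((1 : ℂ) - x) ^ (γ₁ - β₁ - 1) * ((1 : ℂ) - z₁ * x - z₂ * u) ^ (-α) =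
      (u : ℂ) ^ (β₂ - 1) * ((1 : ℂ) - u) ^ (γ₂ - β₂ - 1) *
        ∑' p : ℕ × ℕ, cpoch α (p.1 + p.2) / (p.1 ! * p.2 !) * z₁ ^ p.1 * z₂ ^ p.2 *
          betaIntegral (β₁ + p.1) (γ₁ - β₁) * (u : ℂ) ^ p.2 := by
    intro u hu
    have hzu : ‖z₁‖ + ‖z₂ * u‖ < 1 := by linarith [norm_mul_ofReal_le_norm z₂ hu.1.le hu.2.le]
    calc _ = (u : ℂ) ^ (β₂ - 1) * ((1 : ℂ) - u) ^ (γ₂ - β₂ - 1) * ∫ x in Ioo (0 : ℝ) 1,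
          (x : ℂ) ^ (β₁ - 1) * ((1 : ℂ) - x) ^ (γ₁ - β₁ - 1) * (1 - z₁ * x - z₂ * u) ^ (-α) := by
          rw [← integral_const_mul]
          congr 1 with x
          ring
      _ = _ := by
          rw [integral_betaIntegrand_mul_one_sub_cpow α hβ₁ hv₁ hzu]
          congr 1
          exact tsum_congr fun p ↦ by ring
  rw [setIntegral_congr_fun measurableSet_Ioo hinner, integral_betaIntegrand_mul_tsum hβ₂ hv₂
    (summable_norm_cpoch_add_div_factorial_mul_pow_mul_pow_mul_betaIntegral α hβ₁ hv₁ hz) Prod.snd,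
    appellF2, ← tsum_mul_left]
  refine tsum_congr fun p ↦ ?_
  calc _ = cpoch α (p.1 + p.2) / (p.1 ! * p.2 !) * z₁ ^ p.1 * z₂ ^ p.2 *
        (cpoch β₁ p.1 / cpoch γ₁ p.1) * (cpoch β₂ p.2 / cpoch γ₂ p.2) := by ring
    _ = _ := by
      rw [← Gamma_div_mul_betaIntegral_add_nat hβ₁ hv₁,
        ← Gamma_div_mul_betaIntegral_add_nat hβ₂ hv₂]
      ring
end

section
/- Let α, β₁, β₂, γ₁, γ₂ be complex numbers such that γ₁ and γ₂ are not nonpositive integers, and let A, B be real numbers with 1 < B < A < 2B − 1. Then A^{−α} · F₂(α; β₁, β₂; γ₁, γ₂; 1/A, 1 − B/A) = B^{−α} · F₂(α; β₁, γ₂−β₂; γ₁, γ₂; 1/B, 1 − A/B), where A^{−α} and B^{−α} are principal branch powers of the positive reals A and B. (The hypotheses guarantee (1+A−B)/A < 1 and (1+A−B)/B < 1, so both F₂ series converge absolutely.) -/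
open Complex

/-!
Expanding `F₂` in powers of its first variable gives
`F₂ = ∑ₘ (α)ₘ (β₁)ₘ / ((γ₁)ₘ m!) z₁ᵐ ₂F₁(α + m, β₂; γ₂; z₂)`. For `z₂ = 1 - B/A`, Pfaff's
transformation `₂F₁(a, b; c; t) = (1 - t)^(-a) ₂F₁(a, c - b; c; t/(t - 1))` moves each `₂F₁` to
`t/(t - 1) = 1 - A/B`, and the factor `(B/A)^(-(α + m))` it produces turns `A^(-α) A^(-m)` into
`B^(-α) B^(-m)`.

Pfaff's transformation comes from summing the absolutely convergent double series
`∑ (a)_(k+j) (c - b)ₖ / ((c)ₖ k! j!) (-t)ᵏ tʲ` in two ways: along rows by the binomial series,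
along antidiagonals by the Chu–Vandermonde identity.
-/

open Finset

lemma cpoch_add (x : ℂ) (m n : ℕ) : cpoch x (m + n) = cpoch x m * cpoch (x + m) n := by
  simp [cpoch, ← ascPochhammer_mul, Polynomial.eval_comp]

lemma cpoch_ne_zero {c : ℂ} (hc : ∀ k : ℕ, c ≠ -(k : ℂ)) (n : ℕ) : cpoch c n ≠ 0 := by
  rw [cpoch, ne_eq, ascPochhammer_eval_eq_zero_iff]
  rintro ⟨k, -, hk⟩
  exact hc k (by linear_combination hk)

lemma cpoch_one (n : ℕ) : cpoch 1 n = n.factorial := by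
  simp [cpoch]

lemma descPochhammer_smeval_eq_cpoch (x : ℂ) (n : ℕ) :
    (descPochhammer ℤ n).smeval x = cpoch (x - n + 1) n := by
  rw [Polynomial.descPochhammer_smeval_eq_ascPochhammer, Polynomial.ascPochhammer_smeval_eq_eval,
    cpoch]

lemma cpoch_neg_sub_add_one (x : ℂ) (n : ℕ) : cpoch (-x - n + 1) n = (-1) ^ n * cpoch x n := by
  have h := ascPochhammer_eval_neg_eq_descPochhammer ℂ (-x) n
  rw [neg_neg, descPochhammer_eval_eq_ascPochhammer] at h
  rw [cpoch, cpoch, h, ← mul_assoc, ← mul_pow]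
  simp

-- Chu–Vandermonde
theorem cpoch_sub_eq_sum_antidiagonal (c d : ℂ) (n : ℕ) :
    cpoch (c - d) n = ∑ kj ∈ antidiagonal n, (n.choose kj.1 : ℂ) * ((-1) ^ kj.1 * cpoch d kj.1) *
      cpoch (c + kj.1) kj.2 := by
  have h := Ring.descPochhammer_smeval_add (r := -d) (s := c + n - 1) n (Commute.all _ _)
  simp only [descPochhammer_smeval_eq_cpoch] at h
  rw [show -d + (c + n - 1) - n + 1 = c - d by ring] at h
  rw [h]
  refine sum_congr rfl fun kj hkj => ?_
  have hn : (kj.1 : ℂ) + kj.2 = n := by exact_mod_cast mem_antidiagonal.1 hkj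
  rw [← cpoch_neg_sub_add_one, mul_assoc]
  congr 3
  linear_combination -hn

lemma cpoch_eq_factorial_mul_choose (z : ℂ) (n : ℕ) :
    cpoch z n = n.factorial * Ring.choose (z + n - 1) n := by
  rw [← Ring.multichoose_eq, ← nsmul_eq_mul, Ring.factorial_nsmul_multichoose_eq_ascPochhammer,
    Polynomial.ascPochhammer_smeval_eq_eval, cpoch]

theorem hasSum_cpoch_div_factorial_mul_pow_s2 (z : ℂ) {t : ℂ} (ht : ‖t‖ < 1) :
    HasSum (fun n => cpoch z n / n.factorial * t ^ n) ((1 - t) ^ (-z)) := by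
  have h := (one_div_one_sub_cpow_hasFPowerSeriesOnBall_zero z).hasSum (y := t)
    (by rw [Metric.mem_eball, edist_zero_right, ← ofReal_norm]; exact ENNReal.ofReal_lt_one.2 ht)
  simp only [FormalMultilinearSeries.ofScalars_apply_eq, smul_eq_mul, zero_add] at h
  rw [cpow_neg, ← one_div]
  refine h.congr_fun fun n => ?_
  rw [cpoch_eq_factorial_mul_choose,
    mul_div_cancel_left₀ _ (Nat.cast_ne_zero.2 n.factorial_ne_zero)]

lemma exists_le_mul_pow_of_le_mul {u : ℕ → ℝ} (hu : ∀ n, 0 ≤ u n) {q : ℝ} (hq : 0 < q) (N : ℕ)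
    (h : ∀ n, N ≤ n → u (n + 1) ≤ q * u n) : ∃ C, 0 ≤ C ∧ ∀ n, u n ≤ C * q ^ n := by
  set C := ∑ k ∈ range (N + 1), u k / q ^ k
  have hbase : ∀ n ≤ N, u n ≤ C * q ^ n := fun n hn => by
    rw [← div_le_iff₀ (by positivity)]
    exact single_le_sum (f := fun k => u k / q ^ k) (fun k _ => by have := hu k; positivity)
      (mem_range.2 (by omega))
  refine ⟨C, sum_nonneg fun k _ => by have := hu k; positivity, fun n => ?_⟩
  induction n with
  | zero => exact hbase 0 N.zero_le
  | succ n ih =>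
    rcases le_or_gt N n with hn | hn
    · calc u (n + 1) ≤ q * u n := h n hn
        _ ≤ q * (C * q ^ n) := by gcongr
        _ = C * q ^ (n + 1) := by ring
    · exact hbase (n + 1) hn

-- For `c = -k` the quotients vanish from `n = k + 1` on, by `x / 0 = 0`.
lemma exists_norm_cpoch_div_le (b c : ℂ) {ρ : ℝ} (hρ : 1 < ρ) :
    ∃ C, 0 ≤ C ∧ ∀ n, ‖cpoch b n‖ / ‖cpoch c n‖ ≤ C * ρ ^ n := by
  obtain ⟨N, hN⟩ := exists_nat_ge ((‖b‖ + ρ * ‖c‖) / (ρ - 1))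
  refine exists_le_mul_pow_of_le_mul (fun n => by positivity) (by linarith) N fun n hn => ?_
  have hn' : ‖b‖ + ρ * ‖c‖ ≤ (ρ - 1) * n := by
    rw [div_le_iff₀ (by linarith)] at hN
    nlinarith [(Nat.cast_le (α := ℝ)).2 hn]
  have hb : ‖b + n‖ ≤ ‖b‖ + n := by simpa using norm_add_le b (n : ℂ)
  have hc : (n : ℝ) - ‖c‖ ≤ ‖c + n‖ := by simpa [add_comm] using norm_sub_norm_le (n : ℂ) (-c)
  have hratio : ‖b + n‖ / ‖c + n‖ ≤ ρ := by
    refine div_le_of_le_mul₀ (norm_nonneg _) (by linarith) ?_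
    nlinarith
  have hrec : ‖cpoch b (n + 1)‖ / ‖cpoch c (n + 1)‖
      = ‖b + n‖ / ‖c + n‖ * (‖cpoch b n‖ / ‖cpoch c n‖) := by
    rw [cpoch, cpoch, ascPochhammer_succ_eval, ascPochhammer_succ_eval, norm_mul, norm_mul,
      mul_div_mul_comm, mul_comm, cpoch, cpoch]
  rw [hrec]
  exact mul_le_mul_of_nonneg_right hratio (by positivity)

lemma choose_mul_pow_mul_pow_le {x y : ℝ} (hx : 0 ≤ x) (hy : 0 ≤ y) (m n : ℕ) :
    (m + n).choose m * x ^ m * y ^ n ≤ (x + y) ^ (m + n) := by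
  rw [add_pow]
  refine Eq.trans_le ?_ <| single_le_sum
    (f := fun i => x ^ i * y ^ (m + n - i) * ((m + n).choose i : ℝ))
    (fun i _ => by positivity) (mem_range.2 (by omega : m < m + n + 1))
  rw [add_tsub_cancel_left]
  ring

lemma exists_one_lt_sq_mul_lt_one {σ : ℝ} (hσ₀ : 0 ≤ σ) (hσ : σ < 1) :
    ∃ ρ, 1 < ρ ∧ ρ ^ 2 * σ < 1 :=
  ⟨1 + (1 - σ) / 8, by linarith, by
    nlinarith [mul_nonneg hσ₀ (sub_nonneg.2 hσ.le),
      mul_nonneg (mul_nonneg hσ₀ hσ₀) (sub_nonneg.2 hσ.le)]⟩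

noncomputable def appellF2Term (a b₁ b₂ c₁ c₂ z₁ z₂ : ℂ) (p : ℕ × ℕ) : ℂ :=
  cpoch a (p.1 + p.2) * cpoch b₁ p.1 * cpoch b₂ p.2 /
    (cpoch c₁ p.1 * cpoch c₂ p.2 * (p.1.factorial : ℂ) * (p.2.factorial : ℂ)) *
    z₁ ^ p.1 * z₂ ^ p.2

lemma appellF2_eq_tsum (a b₁ b₂ c₁ c₂ z₁ z₂ : ℂ) :
    appellF2 a b₁ b₂ c₁ c₂ z₁ z₂ = ∑' p, appellF2Term a b₁ b₂ c₁ c₂ z₁ z₂ p := rfl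

lemma appellF2Term_eq_mul (a b₁ b₂ c₁ c₂ z₁ z₂ : ℂ) (m n : ℕ) :
    appellF2Term a b₁ b₂ c₁ c₂ z₁ z₂ (m, n) = cpoch a (m + n) / cpoch 1 (m + n) *
      (cpoch b₁ m / cpoch c₁ m) * (cpoch b₂ n / cpoch c₂ n) *
      ((m + n).choose m * z₁ ^ m * z₂ ^ n) := by
  have hm : (m.factorial : ℂ) ≠ 0 := Nat.cast_ne_zero.2 m.factorial_ne_zero
  have hn : (n.factorial : ℂ) ≠ 0 := Nat.cast_ne_zero.2 n.factorial_ne_zero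
  have hmn : ((m + n).factorial : ℂ) ≠ 0 := Nat.cast_ne_zero.2 (m + n).factorial_ne_zero
  rw [appellF2Term, cpoch_one, Nat.cast_add_choose]
  dsimp only
  field_simp

theorem summable_appellF2Term (a b₁ b₂ c₁ c₂ : ℂ) {z₁ z₂ : ℂ} (hz : ‖z₁‖ + ‖z₂‖ < 1) :
    Summable (appellF2Term a b₁ b₂ c₁ c₂ z₁ z₂) := by
  obtain ⟨ρ, hρ, hρz⟩ := exists_one_lt_sq_mul_lt_one (by positivity) hz
  obtain ⟨C₁, hC₁₀, hC₁⟩ := exists_norm_cpoch_div_le a 1 hρ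
  obtain ⟨C₂, hC₂₀, hC₂⟩ := exists_norm_cpoch_div_le b₁ c₁ hρ
  obtain ⟨C₃, hC₃₀, hC₃⟩ := exists_norm_cpoch_div_le b₂ c₂ hρ
  lift C₁ to NNReal using hC₁₀
  lift C₂ to NNReal using hC₂₀
  lift C₃ to NNReal using hC₃₀
  have hgeom := summable_geometric_of_lt_one (by positivity) hρz
  have hbound : Summable fun p : ℕ × ℕ => (C₁ * C₂ * C₃ : ℝ) *
      ((ρ ^ 2 * (‖z₁‖ + ‖z₂‖)) ^ p.1 * (ρ ^ 2 * (‖z₁‖ + ‖z₂‖)) ^ p.2) :=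
    (hgeom.mul_of_nonneg hgeom (fun _ => by positivity) fun _ => by positivity).mul_left _
  refine Summable.of_norm_bounded hbound fun ⟨m, n⟩ => ?_
  have hchoose : ‖((m + n).choose m * z₁ ^ m * z₂ ^ n : ℂ)‖ ≤ (‖z₁‖ + ‖z₂‖) ^ (m + n) := by
    simpa only [norm_mul, norm_pow, Complex.norm_natCast] using
      choose_mul_pow_mul_pow_le (norm_nonneg z₁) (norm_nonneg z₂) m n
  rw [appellF2Term_eq_mul, norm_mul, norm_mul, norm_mul, norm_div, norm_div, norm_div]
  calc _ ≤ C₁ * ρ ^ (m + n) * (C₂ * ρ ^ m) * (C₃ * ρ ^ n) * (‖z₁‖ + ‖z₂‖) ^ (m + n) := by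
        gcongr ?_ * ?_ * ?_ * ?_
        exacts [hC₁ _, hC₂ _, hC₃ _]
    _ = C₁ * C₂ * C₃ * ((ρ ^ 2 * (‖z₁‖ + ‖z₂‖)) ^ m * (ρ ^ 2 * (‖z₁‖ + ‖z₂‖)) ^ n) := by
      rw [mul_pow, mul_pow]; ring

lemma tsum_eq_tsum_sum_antidiagonal {A α : Type*} [AddCommMonoid A] [HasAntidiagonal A]
    [AddCommMonoid α] [TopologicalSpace α] [ContinuousAdd α] [T3Space α] {f : A × A → α}
    (hf : Summable f) : ∑' p, f p = ∑' n, ∑ kl ∈ antidiagonal n, f kl := by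
  conv_rhs => congr; ext; rw [← sum_finset_coe, ← tsum_fintype (L := .unconditional _)]
  rw [← HasAntidiagonal.sigmaAntidiagonalEquivProd.tsum_eq f]
  exact (HasAntidiagonal.sigmaAntidiagonalEquivProd.summable_iff.2 hf).tsum_sigma'
    fun n => (hasSum_fintype _).summable

lemma cpow_neg_add_natCast {x : ℂ} (hx : x ≠ 0) (a : ℂ) (n : ℕ) :
    x ^ (-(a + n)) = x ^ (-a) * (1 / x) ^ n := by
  rw [neg_add, cpow_add _ _ hx, cpow_neg x n, cpow_natCast, one_div, inv_pow]

lemma ordinaryHypergeometric_eq_tsum_cpoch (a b c x : ℂ) :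
    ₂F₁ a b c x = ∑' n, cpoch a n * cpoch b n / (cpoch c n * n.factorial) * x ^ n := by
  rw [ordinaryHypergeometric, ordinaryHypergeometric_sum_eq]
  refine tsum_congr fun n => ?_
  rw [smul_eq_mul, cpoch, cpoch, cpoch]
  ring

-- The double series behind Pfaff's transformation is the `F₂` series at `(-t, t)` with
-- `b₂ = c₂ = 1`; summed along antidiagonals it gives `₂F₁(a, b; c; t)` by Chu–Vandermonde.
lemma appellF2Term_pfaff_diag (a b : ℂ) {c : ℂ} (hc : ∀ k : ℕ, c ≠ -(k : ℂ)) (t : ℂ) (n : ℕ) :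
    ∑ kj ∈ antidiagonal n, appellF2Term a (c - b) 1 c 1 (-t) t kj
      = cpoch a n * cpoch b n / (cpoch c n * n.factorial) * t ^ n := by
  have hcn := cpoch_ne_zero hc n
  have hn : (n.factorial : ℂ) ≠ 0 := Nat.cast_ne_zero.2 n.factorial_ne_zero
  have hterm : ∀ kj ∈ antidiagonal n, appellF2Term a (c - b) 1 c 1 (-t) t kj
      = cpoch a n / (cpoch c n * n.factorial) * t ^ n *
        ((n.choose kj.1 : ℂ) * ((-1) ^ kj.1 * cpoch (c - b) kj.1) * cpoch (c + kj.1) kj.2) := by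
    rintro ⟨k, j⟩ hkj
    obtain rfl : k + j = n := mem_antidiagonal.1 hkj
    have hk : (k.factorial : ℂ) ≠ 0 := Nat.cast_ne_zero.2 k.factorial_ne_zero
    have hj : (j.factorial : ℂ) ≠ 0 := Nat.cast_ne_zero.2 j.factorial_ne_zero
    obtain ⟨hck, hckj⟩ := mul_ne_zero_iff.1 (cpoch_add c k j ▸ hcn)
    dsimp only
    rw [appellF2Term, cpoch_one, Nat.cast_add_choose, cpoch_add c, neg_pow, pow_add]
    field_simp
  rw [sum_congr rfl hterm, ← mul_sum, ← cpoch_sub_eq_sum_antidiagonal, sub_sub_cancel]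
  ring

lemma appellF2Term_pfaff_row (a b c : ℂ) {t : ℂ} (ht : ‖t‖ < 1) (k : ℕ) :
    HasSum (fun j => appellF2Term a (c - b) 1 c 1 (-t) t (k, j))
      ((1 - t) ^ (-a) * (cpoch a k * cpoch (c - b) k / (cpoch c k * k.factorial) *
        (t / (t - 1)) ^ k)) := by
  have h1t : 1 - t ≠ 0 := sub_ne_zero.2 fun h => by simp [← h] at ht
  have hrow := (hasSum_cpoch_div_factorial_mul_pow_s2 (a + k) ht).mul_left
    (cpoch a k * cpoch (c - b) k / (cpoch c k * k.factorial) * (-t) ^ k)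
  have hval : (1 - t) ^ (-a) * (cpoch a k * cpoch (c - b) k / (cpoch c k * k.factorial) *
      (t / (t - 1)) ^ k) = cpoch a k * cpoch (c - b) k / (cpoch c k * k.factorial) * (-t) ^ k *
        (1 - t) ^ (-(a + k)) := by
    have ht' : t / (t - 1) = -t * (1 / (1 - t)) := by
      rw [div_eq_mul_one_div t, ← neg_sub 1 t, one_div_neg_eq_neg_one_div]
      ring
    rw [cpow_neg_add_natCast h1t, ht']
    ring
  rw [hval]
  refine hrow.congr_fun fun j => ?_
  have hj : (j.factorial : ℂ) ≠ 0 := Nat.cast_ne_zero.2 j.factorial_ne_zero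
  rw [appellF2Term, cpoch_one, cpoch_add]
  field_simp

theorem ordinaryHypergeometric_pfaff (a b : ℂ) {c : ℂ} (hc : ∀ k : ℕ, c ≠ -(k : ℂ)) {t : ℂ}
    (ht : 2 * ‖t‖ < 1) :
    ₂F₁ a b c t = (1 - t) ^ (-a) * ₂F₁ a (c - b) c (t / (t - 1)) := by
  have hT := summable_appellF2Term a (c - b) 1 c 1 (z₁ := -t) (z₂ := t)
    (by rw [norm_neg]; linarith)
  rw [ordinaryHypergeometric_eq_tsum_cpoch, ordinaryHypergeometric_eq_tsum_cpoch,
    ← tsum_mul_left, ← tsum_congr (appellF2Term_pfaff_diag a b hc t),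
    ← tsum_eq_tsum_sum_antidiagonal hT, hT.tsum_prod]
  exact tsum_congr fun k =>
    (appellF2Term_pfaff_row a b c (by linarith [norm_nonneg t]) k).tsum_eq

theorem appellF2_eq_tsum_ordinaryHypergeometric (a b₁ b₂ c₁ c₂ : ℂ) {z₁ z₂ : ℂ}
    (hz : ‖z₁‖ + ‖z₂‖ < 1) :
    appellF2 a b₁ b₂ c₁ c₂ z₁ z₂ =
      ∑' m : ℕ, cpoch a m * cpoch b₁ m / (cpoch c₁ m * m.factorial) * z₁ ^ m *
        ₂F₁ (a + m) b₂ c₂ z₂ := by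
  rw [appellF2_eq_tsum, (summable_appellF2Term a b₁ b₂ c₁ c₂ hz).tsum_prod]
  refine tsum_congr fun m => ?_
  rw [ordinaryHypergeometric_eq_tsum_cpoch, ← tsum_mul_left]
  refine tsum_congr fun n => ?_
  rw [appellF2Term, cpoch_add]
  ring

lemma cpow_neg_mul_one_div_pow_mul_div_cpow {A B : ℝ} (hA : 0 < A) (hB : 0 < B) (a : ℂ)
    (m : ℕ) :
    (A : ℂ) ^ (-a) * (1 / (A : ℂ)) ^ m * ((B : ℂ) / A) ^ (-(a + m))
      = (B : ℂ) ^ (-a) * (1 / (B : ℂ)) ^ m := by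
  have hBA : ((B / A : ℝ) : ℂ) = B / A := by push_cast; rfl
  rw [← cpow_neg_add_natCast (ofReal_ne_zero.2 hA.ne'),
    ← cpow_neg_add_natCast (ofReal_ne_zero.2 hB.ne'), ← hBA,
    ← mul_cpow_ofReal_nonneg hA.le (div_nonneg hB.le hA.le), ← ofReal_mul, mul_div_cancel₀ _ hA.ne']

lemma norm_one_div_ofReal {x : ℝ} (hx : 0 < x) : ‖1 / (x : ℂ)‖ = 1 / x := by
  rw [norm_div, norm_one, norm_real, Real.norm_of_nonneg hx.le]

lemma norm_one_sub_div_ofReal {x : ℝ} (hx : 0 < x) (y : ℝ) :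
    ‖1 - (y : ℂ) / x‖ = |x - y| / x := by
  rw [show 1 - (y : ℂ) / x = ((x - y) / x : ℝ) by
      push_cast; rw [sub_div, div_self (ofReal_ne_zero.2 hx.ne')], norm_real,
    Real.norm_eq_abs, abs_div, abs_of_pos hx]

lemma one_sub_div_div_one_sub_div_sub_one {x y : ℂ} (hx : x ≠ 0) (hy : y ≠ 0) :
    (1 - y / x) / (1 - y / x - 1) = 1 - x / y := by
  rw [sub_sub_cancel_left]
  field_simp
  ring

theorem statement2_general (α β₁ β₂ γ₁ γ₂ : ℂ) (A B : ℝ)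
    (hγ₂ : ∀ n : ℕ, γ₂ ≠ -(n : ℂ))
    (hB : 1 < B) (hBA : B < A) (hA : A < 2 * B - 1) :
    (A : ℂ) ^ (-α) *
      appellF2 α β₁ β₂ γ₁ γ₂ (1 / (A : ℂ)) (1 - (B : ℂ) / (A : ℂ)) =
    (B : ℂ) ^ (-α) *
      appellF2 α β₁ (γ₂ - β₂) γ₁ γ₂ (1 / (B : ℂ)) (1 - (A : ℂ) / (B : ℂ)) := by
  have hB₀ : 0 < B := zero_lt_one.trans hB
  have hA₀ : 0 < A := hB₀.trans hBA
  have hy : ‖1 - (B : ℂ) / A‖ = (A - B) / A := by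
    rw [norm_one_sub_div_ofReal hA₀, abs_of_pos (sub_pos.2 hBA)]
  have hz₁ : ‖1 / (A : ℂ)‖ + ‖1 - (B : ℂ) / A‖ < 1 := by
    rw [norm_one_div_ofReal hA₀, hy, ← add_div, div_lt_one hA₀]
    linarith
  have hz₂ : ‖1 / (B : ℂ)‖ + ‖1 - (A : ℂ) / B‖ < 1 := by
    rw [norm_one_div_ofReal hB₀, norm_one_sub_div_ofReal hB₀, abs_sub_comm,
      abs_of_pos (sub_pos.2 hBA), ← add_div, div_lt_one hB₀]
    linarith
  have hpfaff : 2 * ‖1 - (B : ℂ) / A‖ < 1 := by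
    rw [hy, mul_div_assoc', div_lt_one hA₀]
    linarith
  rw [appellF2_eq_tsum_ordinaryHypergeometric _ _ _ _ _ hz₁,
    appellF2_eq_tsum_ordinaryHypergeometric _ _ _ _ _ hz₂, ← tsum_mul_left, ← tsum_mul_left]
  refine tsum_congr fun m => ?_
  rw [ordinaryHypergeometric_pfaff _ _ hγ₂ hpfaff, sub_sub_cancel,
    one_sub_div_div_one_sub_div_sub_one (ofReal_ne_zero.2 hA₀.ne') (ofReal_ne_zero.2 hB₀.ne')]
  linear_combination cpoch α m * cpoch β₁ m / (cpoch γ₁ m * m.factorial) *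
    ₂F₁ (α + m) (γ₂ - β₂) γ₂ (1 - (A : ℂ) / B) *
      cpow_neg_mul_one_div_pow_mul_div_cpow hA₀ hB₀ α m

/-- Linear transformation for Appell's `F₂` induced by `(A,B) ↦ (B,A)`. -/
theorem statement2 (α β₁ β₂ γ₁ γ₂ : ℂ) (A B : ℝ)
    (hγ₁ : ∀ n : ℕ, γ₁ ≠ -(n : ℂ)) (hγ₂ : ∀ n : ℕ, γ₂ ≠ -(n : ℂ))
    (hB : 1 < B) (hBA : B < A) (hA : A < 2 * B - 1) :
    (A : ℂ) ^ (-α) *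
      appellF2 α β₁ β₂ γ₁ γ₂ (1 / (A : ℂ)) (1 - (B : ℂ) / (A : ℂ)) =
    (B : ℂ) ^ (-α) *
      appellF2 α β₁ (γ₂ - β₂) γ₁ γ₂ (1 / (B : ℂ)) (1 - (A : ℂ) / (B : ℂ)) :=
  statement2_general α β₁ β₂ γ₁ γ₂ A B hγ₂ hB hBA hA
end

section
/- Let r, q be positive integers with 0 < q < 2r, let Λ₂ be a complex number with Λ₂ ∉ {0, 1}, and let ζ₁ be a nonzero complex number. Set λ₁ = ((1+Λ₂)/(1−Λ₂))² and ζ₂ = −(ζ₁−1)(ζ₁−λ₁)(1−Λ₂)²/(4ζ₁). Then the correspondence identity holds: (−1)^{q} · 4^{−4r+q} · ζ₁^{q} (ζ₁−1)^{2r−q} (ζ₁−λ₁)^{2r−q} (ζ₁²−λ₁)^{2r} = ζ₁^{4r} · ζ₂^{2r−q} (ζ₂−1)^{r} (ζ₂−Λ₂²)^{r} · (Λ₂−1)^{−8r+2q}, where 4^{−4r+q} and (Λ₂−1)^{−8r+2q} denote the corresponding integer powers (i.e. inverses of 4^{4r−q} and (Λ₂−1)^{8r−2q}) in ℂ. -/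
/-- The `(8r−q, 4r−q)`-correspondence in `(ζ₁, ζ₂)` governing the rational
transformation between `SE(λ₁)^{2r}_{r,q,r}` and `SE(Λ₂²)^{2r}_{r,r,2r−q}`. -/
theorem statement12 (r q : ℕ) (hr : 0 < r) (hq0 : 0 < q) (hq : q < 2 * r)
    (Λ₂ : ℂ) (hΛ0 : Λ₂ ≠ 0) (hΛ1 : Λ₂ ≠ 1)
    (ζ₁ : ℂ) (hζ₁ : ζ₁ ≠ 0) (lam₁ ζ₂ : ℂ)
    (hlam : lam₁ = ((1 + Λ₂) / (1 - Λ₂)) ^ 2)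
    (hζ₂ : ζ₂ = -((ζ₁ - 1) * (ζ₁ - lam₁) * (1 - Λ₂) ^ 2) / (4 * ζ₁)) :
    (-1 : ℂ) ^ q * ((4 : ℂ) ^ (4 * r - q))⁻¹ *
      (ζ₁ ^ q * (ζ₁ - 1) ^ (2 * r - q) * (ζ₁ - lam₁) ^ (2 * r - q) *
        (ζ₁ ^ 2 - lam₁) ^ (2 * r)) =
    ζ₁ ^ (4 * r) * (ζ₂ ^ (2 * r - q) * (ζ₂ - 1) ^ r * (ζ₂ - Λ₂ ^ 2) ^ r) *
      ((Λ₂ - 1) ^ (8 * r - 2 * q))⁻¹ := by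
  have hc : (1 - Λ₂) ≠ 0 := sub_ne_zero.mpr (Ne.symm hΛ1)
  obtain ⟨k, hqk⟩ : ∃ k, 2 * r = q + k := ⟨2 * r - q, by omega⟩
  have h2rq : 2 * r - q = k := by omega
  have h4rq : 4 * r - q = 2 * r + k := by omega
  have h8rq : 8 * r - 2 * q = 4 * r + 2 * k := by omega
  rw [h2rq, h4rq, h8rq]
  have hsign : (-1 : ℂ) ^ k = (-1) ^ q := by
    have h1 : ((-1 : ℂ)) ^ q * (-1) ^ k = 1 := by
      rw [← pow_add, ← hqk, pow_mul]; norm_num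
    have h2 : ((-1 : ℂ)) ^ q * (-1) ^ q = 1 := by
      rw [← pow_add, show q + q = 2 * q by ring, pow_mul]; norm_num
    have h3 : ((-1 : ℂ)) ^ q ≠ 0 := pow_ne_zero _ (by norm_num)
    exact mul_left_cancel₀ h3 (h1.trans h2.symm)
  have hA : ζ₂ - 1 = -(((1 - Λ₂) * ζ₁ + (1 + Λ₂)) ^ 2) / (4 * ζ₁) := by
    rw [hζ₂, hlam]; field_simp; ring
  have hB : ζ₂ - Λ₂ ^ 2 = -(((1 - Λ₂) * ζ₁ - (1 + Λ₂)) ^ 2) / (4 * ζ₁) := by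
    rw [hζ₂, hlam]; field_simp; ring
  have hABpow : (ζ₁ ^ 2 - lam₁) ^ (2 * r) =
      ((1 - Λ₂) * ζ₁ + (1 + Λ₂)) ^ (2 * r) * ((1 - Λ₂) * ζ₁ - (1 + Λ₂)) ^ (2 * r) /
        (1 - Λ₂) ^ (4 * r) := by
    have hbase : ζ₁ ^ 2 - lam₁ =
        ((1 - Λ₂) * ζ₁ + (1 + Λ₂)) * ((1 - Λ₂) * ζ₁ - (1 + Λ₂)) / (1 - Λ₂) ^ 2 := by
      rw [hlam]; field_simp; ring
    rw [hbase, div_pow, mul_pow, ← pow_mul, show 2 * (2 * r) = 4 * r by ring]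
  have hden : (((4 : ℂ) * ζ₁) * (4 * ζ₁)) ^ r = 4 ^ (2 * r) * ζ₁ ^ (2 * r) := by
    rw [show (4 : ℂ) * ζ₁ * (4 * ζ₁) = (4 * ζ₁) ^ 2 by ring, ← pow_mul, mul_pow]
  have hprod : (ζ₂ - 1) ^ r * (ζ₂ - Λ₂ ^ 2) ^ r =
      ((1 - Λ₂) * ζ₁ + (1 + Λ₂)) ^ (2 * r) * ((1 - Λ₂) * ζ₁ - (1 + Λ₂)) ^ (2 * r) /
        (4 ^ (2 * r) * ζ₁ ^ (2 * r)) := by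
    rw [hA, hB, ← mul_pow, div_mul_div_comm, neg_mul_neg, div_pow, mul_pow, hden,
      ← pow_mul, ← pow_mul]
  have hz2pow : ζ₂ ^ k = (-1 : ℂ) ^ q *
      (((ζ₁ - 1) ^ k * (ζ₁ - lam₁) ^ k * (1 - Λ₂) ^ (2 * k)) / ((4 : ℂ) ^ k * ζ₁ ^ k)) := by
    rw [hζ₂, div_pow, neg_pow, hsign, mul_pow, mul_pow, mul_pow, mul_div_assoc, ← pow_mul]
  have hneg : ((Λ₂ - 1) ^ (4 * r + 2 * k) : ℂ) = (1 - Λ₂) ^ (4 * r + 2 * k) := by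
    rw [show (Λ₂ - 1 : ℂ) = -(1 - Λ₂) by ring,
      show 4 * r + 2 * k = 2 * (2 * r + k) by ring, pow_mul, pow_mul, neg_sq]
  rw [hABpow, hz2pow, mul_assoc ((-1 : ℂ) ^ q * _), hprod, hneg]
  have h4 : (4 : ℂ) ≠ 0 := by norm_num
  have n1 : ((4 : ℂ)) ^ (2 * r + k) ≠ 0 := pow_ne_zero _ h4
  have n2 : ((4 : ℂ)) ^ k ≠ 0 := pow_ne_zero _ h4
  have n3 : ((4 : ℂ)) ^ (2 * r) ≠ 0 := pow_ne_zero _ h4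
  have n4 : ζ₁ ^ k ≠ 0 := pow_ne_zero _ hζ₁
  have n5 : ζ₁ ^ (2 * r) ≠ 0 := pow_ne_zero _ hζ₁
  have n6 : (1 - Λ₂) ^ (4 * r) ≠ 0 := pow_ne_zero _ hc
  have n8 : (1 - Λ₂) ^ (2 * k) ≠ 0 := pow_ne_zero _ hc
  have hz14 : ζ₁ ^ (4 * r) = ζ₁ ^ q * ζ₁ ^ k * ζ₁ ^ (2 * r) := by
    rw [← pow_add, ← pow_add]; congr 1; omega
  rw [hz14]
  have n7 : (1 - Λ₂) ^ (4 * r + 2 * k) ≠ 0 := pow_ne_zero _ hc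
  field_simp
  ring
end

section
/- (Generalized fibration 𝔍₆) Let r, p, q be positive integers with 0 < p, q < 2r, −r < p − q < r, r < p + q < 3r. Let Λ₁, Λ₂, ζ₁, ζ₂, η₁, η₂ be complex numbers with Λ₁² ≠ 1, ζ₁ ≠ 0, ζ₁ ≠ 1, ζ₂ ≠ 0, satisfying η₁^{2r} = ζ₁^{p+q−r}(ζ₁−1)^{2r−p}(ζ₁−Λ₁²)^{2r−p} and η₂^{2r} = ζ₂^{3r−p−q}(ζ₂−1)^{p}(ζ₂−Λ₂²)^{p}. Define U = ζ₁/ζ₂, X = ζ₁(ζ₁−Λ₁²)(ζ₁−ζ₂)(Λ₂²ζ₁−ζ₂) / (ζ₂³(ζ₁−1)), and Y = (Λ₁²−1)ζ₁²(ζ₁−ζ₂)(Λ₂²ζ₁−ζ₂)η₁η₂ / (ζ₂⁵(ζ₁−1)²). Then Y^{2r} = (1−Λ₁²)^{2(r−p)} · U^{−2p+q+r} · X^{2r−p} · (X − U(U−Λ₁²)(Λ₂²U−1))^{p} · (X − U(U−1)(Λ₂²U−Λ₁²))^{p}, where powers with negative integer exponents denote the corresponding inverses in ℂ. -/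
set_option maxHeartbeats 1600000 in
/-- Generalized fibration `𝔍₆` on the generalized Kummer variety
`S₀^{(r,p,q)}(Λ₁², Λ₂²)`. -/
theorem statement14 (r p q : ℕ) (hr : 0 < r) (hp0 : 0 < p) (hp : p < 2 * r)
    (hq0 : 0 < q) (hq : q < 2 * r)
    (hpq1 : (p : ℤ) - q < r) (hpq2 : (q : ℤ) - p < r)
    (hpq3 : r < p + q) (hpq4 : p + q < 3 * r)
    (Λ₁ Λ₂ ζ₁ ζ₂ η₁ η₂ : ℂ)
    (hΛ₁ : Λ₁ ^ 2 ≠ 1) (hζ₁0 : ζ₁ ≠ 0) (hζ₁1 : ζ₁ ≠ 1) (hζ₂0 : ζ₂ ≠ 0)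
    (hcurve1 : η₁ ^ (2 * r) =
      ζ₁ ^ (p + q - r) * (ζ₁ - 1) ^ (2 * r - p) * (ζ₁ - Λ₁ ^ 2) ^ (2 * r - p))
    (hcurve2 : η₂ ^ (2 * r) =
      ζ₂ ^ (3 * r - p - q) * (ζ₂ - 1) ^ p * (ζ₂ - Λ₂ ^ 2) ^ p)
    (U X Y : ℂ)
    (hU : U = ζ₁ / ζ₂)
    (hX : X = ζ₁ * (ζ₁ - Λ₁ ^ 2) * (ζ₁ - ζ₂) * (Λ₂ ^ 2 * ζ₁ - ζ₂) /
      (ζ₂ ^ 3 * (ζ₁ - 1)))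
    (hY : Y = (Λ₁ ^ 2 - 1) * ζ₁ ^ 2 * (ζ₁ - ζ₂) * (Λ₂ ^ 2 * ζ₁ - ζ₂) * η₁ * η₂ /
      (ζ₂ ^ 5 * (ζ₁ - 1) ^ 2)) :
    Y ^ (2 * r) =
      (1 - Λ₁ ^ 2) ^ (2 * ((r : ℤ) - (p : ℤ))) *
      U ^ ((q : ℤ) + (r : ℤ) - 2 * (p : ℤ)) *
      X ^ (2 * r - p) *
      (X - U * (U - Λ₁ ^ 2) * (Λ₂ ^ 2 * U - 1)) ^ p *
      (X - U * (U - 1) * (Λ₂ ^ 2 * U - Λ₁ ^ 2)) ^ p := by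
  obtain ⟨s, hs⟩ : ∃ s, 2 * r = p + s := ⟨2 * r - p, by omega⟩
  obtain ⟨t, ht⟩ : ∃ t, p + q = r + t := ⟨p + q - r, by omega⟩
  obtain ⟨u, hu, hut⟩ : ∃ u, 3 * r - p - q = u ∧ u + t = p + s :=
    ⟨3 * r - p - q, rfl, by omega⟩
  have hL : (1 : ℂ) - Λ₁ ^ 2 ≠ 0 := by
    intro h; apply hΛ₁; linear_combination -h
  have hζ₁1' : ζ₁ - 1 ≠ 0 := sub_ne_zero.mpr hζ₁1
  have hU0 : U ≠ 0 := by rw [hU]; exact div_ne_zero hζ₁0 hζ₂0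
  -- common ingredients
  set L : ℂ := 1 - Λ₁ ^ 2 with hLdef
  set W₀ : ℂ := L * ζ₁ ^ 2 * (ζ₁ - ζ₂) * (Λ₂ ^ 2 * ζ₁ - ζ₂) / (ζ₂ ^ 5 * (ζ₁ - 1) ^ 2)
    with hW₀
  set α : ℂ := L * ζ₁ ^ 2 * (ζ₁ - Λ₁ ^ 2) * (ζ₁ - ζ₂) * (Λ₂ ^ 2 * ζ₁ - ζ₂) /
    (ζ₂ ^ 4 * (ζ₁ - 1)) with hα
  set β : ℂ := L * ζ₁ ^ 2 * (ζ₁ - ζ₂) * (Λ₂ ^ 2 * ζ₁ - ζ₂) * (1 - ζ₂) * (Λ₂ ^ 2 - ζ₂) /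
    (ζ₂ ^ 4 * (ζ₁ - 1) ^ 2) with hβ
  -- curve 1 with clean exponents
  have hc1 : η₁ ^ (p + s) = ζ₁ ^ t * (ζ₁ - 1) ^ s * (ζ₁ - Λ₁ ^ 2) ^ s := by
    rw [show p + q - r = t by omega, show 2 * r - p = s by omega, hs] at hcurve1
    exact hcurve1
  -- curve 2 with clean exponents
  have hb : (ζ₂ - 1) ^ p * (ζ₂ - Λ₂ ^ 2) ^ p
      = (1 - ζ₂) ^ p * (Λ₂ ^ 2 - ζ₂) ^ p := by
    rw [← mul_pow, ← mul_pow]; congr 1; ring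
  have hζ₂t : ζ₂ ^ u * ζ₂ ^ t = ζ₂ ^ (p + s) := by rw [← pow_add, hut]
  have hc2 : η₂ ^ (p + s)
      = ζ₂ ^ (p + s) * (1 - ζ₂) ^ p * (Λ₂ ^ 2 - ζ₂) ^ p * (ζ₂ ^ t)⁻¹ := by
    have h2r : η₂ ^ (p + s) = ζ₂ ^ u * ((ζ₂ - 1) ^ p * (ζ₂ - Λ₂ ^ 2) ^ p) := by
      rw [show p + s = 2 * r by omega, hcurve2, hu, mul_assoc]
    rw [h2r, hb, eq_mul_inv_iff_mul_eq₀ (pow_ne_zero t hζ₂0), ← hζ₂t]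
    ring
  -- Lemma 1 : Y^(2r) = α^s * β^p * (ζ₁/ζ₂)^t
  have hYW : Y ^ (2 * r) = W₀ ^ (p + s) * η₁ ^ (p + s) * η₂ ^ (p + s) := by
    have h2 : Y ^ 2 = (W₀ * η₁ * η₂) ^ 2 := by
      rw [hY, hW₀, hLdef]; ring
    rw [pow_mul, h2, ← pow_mul, hs, mul_pow, mul_pow]
  have e1 : W₀ * ((ζ₁ - 1) * ((ζ₁ - Λ₁ ^ 2) * ζ₂)) = α := by
    rw [hW₀, hα]; field_simp
  have e2 : W₀ * (ζ₂ * ((1 - ζ₂) * (Λ₂ ^ 2 - ζ₂))) = β := by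
    rw [hW₀, hβ]; field_simp
  have lem1 : Y ^ (2 * r) = α ^ s * β ^ p * (ζ₁ / ζ₂) ^ t := by
    rw [hYW, hc1, hc2, ← e1, ← e2]
    simp only [mul_pow, div_pow, pow_add, div_eq_mul_inv]
    ring
  -- the two factor identities
  have hA : X - U * (U - Λ₁ ^ 2) * (Λ₂ ^ 2 * U - 1)
      = ζ₁ ^ 2 * (Λ₂ ^ 2 * ζ₁ - ζ₂) * (1 - ζ₂) * L /
        (ζ₂ ^ 3 * (ζ₁ - 1)) := by
    rw [hX, hU, hLdef]; field_simp; ring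
  have hB : X - U * (U - 1) * (Λ₂ ^ 2 * U - Λ₁ ^ 2)
      = ζ₁ ^ 2 * (ζ₁ - ζ₂) * (Λ₂ ^ 2 - ζ₂) * L /
        (ζ₂ ^ 3 * (ζ₁ - 1)) := by
    rw [hX, hU, hLdef]; field_simp; ring
  -- zpow rewrites
  have hz1 : L ^ (2 * ((r : ℤ) - (p : ℤ))) = L ^ s * (L ^ p)⁻¹ := by
    rw [show 2 * ((r : ℤ) - (p : ℤ)) = (s : ℤ) - (p : ℤ) by omega,
      zpow_sub₀ hL, zpow_natCast, zpow_natCast, div_eq_mul_inv]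
  have hz2 : U ^ ((q : ℤ) + (r : ℤ) - 2 * (p : ℤ))
      = U ^ (s + t) * (U ^ (2 * p))⁻¹ := by
    rw [show (q : ℤ) + (r : ℤ) - 2 * (p : ℤ) = ((s + t : ℕ) : ℤ) - ((2 * p : ℕ) : ℤ) by
        push_cast; omega,
      zpow_sub₀ hU0, zpow_natCast, zpow_natCast, div_eq_mul_inv]
  -- base identities for the right-hand side
  have f1 : L * (U * X) = α := by
    rw [hU, hX, hα]; field_simp
  have f2 : (ζ₁ ^ 2 * (Λ₂ ^ 2 * ζ₁ - ζ₂) * (1 - ζ₂) * L / (ζ₂ ^ 3 * (ζ₁ - 1))) *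
      (ζ₁ ^ 2 * (ζ₁ - ζ₂) * (Λ₂ ^ 2 - ζ₂) * L / (ζ₂ ^ 3 * (ζ₁ - 1))) *
      (L * U ^ 2)⁻¹ = β := by
    have hLU2 : L * U ^ 2 ≠ 0 := mul_ne_zero hL (pow_ne_zero 2 hU0)
    rw [← div_eq_mul_inv, div_eq_iff hLU2, hU, hβ]
    field_simp
  have lem2 : L ^ (2 * ((r : ℤ) - (p : ℤ))) *
      U ^ ((q : ℤ) + (r : ℤ) - 2 * (p : ℤ)) *
      X ^ s *
      (X - U * (U - Λ₁ ^ 2) * (Λ₂ ^ 2 * U - 1)) ^ p *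
      (X - U * (U - 1) * (Λ₂ ^ 2 * U - Λ₁ ^ 2)) ^ p
      = α ^ s * β ^ p * (ζ₁ / ζ₂) ^ t := by
    rw [hz1, hz2, hA, hB, ← f1, ← f2, ← hU]
    simp only [mul_pow, div_pow, pow_add, pow_mul, mul_inv, inv_pow, inv_inv]
    ring
  rw [show 2 * r - p = s by omega]
  rw [lem1, ← lem2, hLdef]
end

section
/- (Generalized fibration 𝔍₇) Let r, p, q be positive integers with 0 < p, q < 2r, −r < p − q < r, r < p + q < 3r. Let Λ₁, Λ₂, ζ₁, ζ₂, η₁, η₂ be complex numbers with Λ₂ ≠ 0, Λ₂² ≠ 1, ζ₂ ≠ 1, Λ₂²ζ₁ − ζ₂ ≠ 0, satisfying η₁^{2r} = ζ₁^{p+q−r}(ζ₁−1)^{2r−p}(ζ₁−Λ₁²)^{2r−p} and η₂^{2r} = ζ₂^{3r−p−q}(ζ₂−1)^{p}(ζ₂−Λ₂²)^{p}. Define U = (ζ₂−Λ₂²)(ζ₁−ζ₂) / ((ζ₂−1)(Λ₂²ζ₁−ζ₂)), X = Λ₂²(Λ₂²−1)²ζ₁ζ₂(ζ₁−1)²(ζ₂−Λ₂²)(ζ₁−ζ₂)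 / ((ζ₂−1)³(Λ₂²ζ₁−ζ₂)³), and Y = −Λ₂²(Λ₂²−1)³(ζ₁−1)²ζ₂(ζ₂−Λ₂²)(ζ₁−ζ₂)²η₁η₂ / ((Λ₂²ζ₁−ζ₂)⁴(ζ₂−1)⁵). If moreover U ≠ 0 whenever 2p > q + r, and U ≠ 1 whenever q > r, then Y^{2r} = Λ₂^{2(r−q)} (Λ₂²−1)^{2(p−r)} U^{2p−q−r} (U−1)^{2(r−q)} X^{p+q−r} · (X² − U(U−1)((Λ₁²Λ₂²+1)U − Λ₁² − Λ₂²)X + Λ₁²Λ₂²U²(U−1)⁴)^{2r−p}, where powers with negative integer exponents denote the corresponding inverses in ℂ. -/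
set_option maxHeartbeats 4000000 in
/-- Generalized fibration `𝔍₇` on the generalized Kummer variety
`S₀^{(r,p,q)}(Λ₁², Λ₂²)`. -/
theorem statement15 (r p q : ℕ) (hr : 0 < r) (hp0 : 0 < p) (hp : p < 2 * r)
    (hq0 : 0 < q) (hq : q < 2 * r)
    (hpq1 : (p : ℤ) - q < r) (hpq2 : (q : ℤ) - p < r)
    (hpq3 : r < p + q) (hpq4 : p + q < 3 * r)
    (Λ₁ Λ₂ ζ₁ ζ₂ η₁ η₂ : ℂ)
    (hΛ₂0 : Λ₂ ≠ 0) (hΛ₂1 : Λ₂ ^ 2 ≠ 1) (hζ₂1 : ζ₂ ≠ 1)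
    (hden : Λ₂ ^ 2 * ζ₁ - ζ₂ ≠ 0)
    (hcurve1 : η₁ ^ (2 * r) =
      ζ₁ ^ (p + q - r) * (ζ₁ - 1) ^ (2 * r - p) * (ζ₁ - Λ₁ ^ 2) ^ (2 * r - p))
    (hcurve2 : η₂ ^ (2 * r) =
      ζ₂ ^ (3 * r - p - q) * (ζ₂ - 1) ^ p * (ζ₂ - Λ₂ ^ 2) ^ p)
    (U X Y : ℂ)
    (hU : U = (ζ₂ - Λ₂ ^ 2) * (ζ₁ - ζ₂) / ((ζ₂ - 1) * (Λ₂ ^ 2 * ζ₁ - ζ₂)))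
    (hX : X = Λ₂ ^ 2 * (Λ₂ ^ 2 - 1) ^ 2 * ζ₁ * ζ₂ * (ζ₁ - 1) ^ 2 *
      (ζ₂ - Λ₂ ^ 2) * (ζ₁ - ζ₂) / ((ζ₂ - 1) ^ 3 * (Λ₂ ^ 2 * ζ₁ - ζ₂) ^ 3))
    (hY : Y = -(Λ₂ ^ 2 * (Λ₂ ^ 2 - 1) ^ 3 * (ζ₁ - 1) ^ 2 * ζ₂ *
      (ζ₂ - Λ₂ ^ 2) * (ζ₁ - ζ₂) ^ 2 * η₁ * η₂ /
      ((Λ₂ ^ 2 * ζ₁ - ζ₂) ^ 4 * (ζ₂ - 1) ^ 5)))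
    (hU0 : (q : ℤ) + r < 2 * p → U ≠ 0) (hU1 : r < q → U ≠ 1) :
    Y ^ (2 * r) =
      Λ₂ ^ (2 * ((r : ℤ) - (q : ℤ))) * (Λ₂ ^ 2 - 1) ^ (2 * ((p : ℤ) - (r : ℤ))) *
      U ^ (2 * (p : ℤ) - (q : ℤ) - (r : ℤ)) * (U - 1) ^ (2 * ((r : ℤ) - (q : ℤ))) *
      X ^ (p + q - r) *
      (X ^ 2 - U * (U - 1) * ((Λ₁ ^ 2 * Λ₂ ^ 2 + 1) * U - Λ₁ ^ 2 - Λ₂ ^ 2) * X +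
        Λ₁ ^ 2 * Λ₂ ^ 2 * U ^ 2 * (U - 1) ^ 4) ^ (2 * r - p) := by
  have h2r : 2 * r ≠ 0 := by omega
  have hiNe : p + q - r ≠ 0 := by omega
  by_cases hz1 : ζ₁ = 0
  · subst hz1
    have hη : η₁ = 0 := by
      refine (pow_eq_zero_iff h2r).mp ?_
      rw [hcurve1, zero_pow hiNe]; simp
    have hY0 : Y = 0 := by rw [hY, hη]; ring
    have hX0 : X = 0 := by rw [hX]; ring
    rw [hY0, hX0, zero_pow h2r, zero_pow hiNe]; simp
  by_cases hz2 : ζ₂ = 0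
  · subst hz2
    have hY0 : Y = 0 := by rw [hY]; ring
    have hX0 : X = 0 := by rw [hX]; ring
    rw [hY0, hX0, zero_pow h2r, zero_pow hiNe]; simp
  by_cases hz3 : ζ₁ = 1
  · subst hz3
    have hY0 : Y = 0 := by rw [hY]; ring
    have hX0 : X = 0 := by rw [hX]; ring
    rw [hY0, hX0, zero_pow h2r, zero_pow hiNe]; simp
  by_cases hz4 : ζ₂ = Λ₂ ^ 2
  · subst hz4
    have hY0 : Y = 0 := by rw [hY]; ring
    have hX0 : X = 0 := by rw [hX]; ring
    rw [hY0, hX0, zero_pow h2r, zero_pow hiNe]; simp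
  by_cases hz5 : ζ₁ = ζ₂
  · subst hz5
    have hY0 : Y = 0 := by rw [hY]; ring
    have hX0 : X = 0 := by rw [hX]; ring
    rw [hY0, hX0, zero_pow h2r, zero_pow hiNe]; simp
  -- main case: all relevant quantities are nonzero
  have h5 : ζ₁ - 1 ≠ 0 := sub_ne_zero.mpr hz3
  have h6 : ζ₂ - 1 ≠ 0 := sub_ne_zero.mpr hζ₂1
  have h7 : ζ₂ - Λ₂ ^ 2 ≠ 0 := sub_ne_zero.mpr hz4
  have h8 : ζ₁ - ζ₂ ≠ 0 := sub_ne_zero.mpr hz5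
  have h2 : Λ₂ ^ 2 - 1 ≠ 0 := sub_ne_zero.mpr hΛ₂1
  have hD : (ζ₂ - 1) * (Λ₂ ^ 2 * ζ₁ - ζ₂) ≠ 0 := mul_ne_zero h6 hden
  have hB0 : (Λ₂ ^ 2 * ζ₁ - ζ₂) ^ 4 * (ζ₂ - 1) ^ 5 ≠ 0 :=
    mul_ne_zero (pow_ne_zero _ hden) (pow_ne_zero _ h6)
  have hU0' : U ≠ 0 := by
    rw [hU]; exact div_ne_zero (mul_ne_zero h7 h8) hD
  have hUc : U * ((ζ₂ - 1) * (Λ₂ ^ 2 * ζ₁ - ζ₂)) = (ζ₂ - Λ₂ ^ 2) * (ζ₁ - ζ₂) := by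
    rw [hU, div_mul_cancel₀ _ hD]
  have hU1c : (U - 1) * ((ζ₂ - 1) * (Λ₂ ^ 2 * ζ₁ - ζ₂))
      = -((Λ₂ ^ 2 - 1) * ζ₂ * (ζ₁ - 1)) := by
    rw [sub_mul, hUc]; ring
  have hU1' : U - 1 ≠ 0 := by
    intro h
    exact (neg_ne_zero.mpr (mul_ne_zero (mul_ne_zero h2 hz2) h5))
      (by rw [← hU1c, h, zero_mul])
  have hXc : X * ((ζ₂ - 1) * (Λ₂ ^ 2 * ζ₁ - ζ₂)) ^ 3
      = Λ₂ ^ 2 * (Λ₂ ^ 2 - 1) ^ 2 * ζ₁ * ζ₂ * (ζ₁ - 1) ^ 2 * (ζ₂ - Λ₂ ^ 2) * (ζ₁ - ζ₂) := by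
    rw [hX, mul_pow]
    rw [div_mul_cancel₀ _ (mul_ne_zero (pow_ne_zero 3 h6) (pow_ne_zero 3 hden))]
  have hYc : Y * ((Λ₂ ^ 2 * ζ₁ - ζ₂) ^ 4 * (ζ₂ - 1) ^ 5)
      = -(Λ₂ ^ 2 * (Λ₂ ^ 2 - 1) ^ 3 * (ζ₁ - 1) ^ 2 * ζ₂ *
          (ζ₂ - Λ₂ ^ 2) * (ζ₁ - ζ₂) ^ 2 * η₁ * η₂) := by
    rw [hY, neg_mul, div_mul_cancel₀ _ hB0]
  have hQc : (X ^ 2 - U * (U - 1) * ((Λ₁ ^ 2 * Λ₂ ^ 2 + 1) * U - Λ₁ ^ 2 - Λ₂ ^ 2) * X +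
        Λ₁ ^ 2 * Λ₂ ^ 2 * U ^ 2 * (U - 1) ^ 4) * ((ζ₂ - 1) * (Λ₂ ^ 2 * ζ₁ - ζ₂)) ^ 6
      = Λ₂ ^ 2 * (Λ₂ ^ 2 - 1) ^ 4 * ζ₂ ^ 2 * (ζ₁ - 1) ^ 3 * (ζ₂ - Λ₂ ^ 2) ^ 2 *
          (ζ₁ - ζ₂) ^ 3 * (ζ₁ - Λ₁ ^ 2) * (Λ₂ ^ 2 * ζ₁ - ζ₂) := by
    calc (X ^ 2 - U * (U - 1) * ((Λ₁ ^ 2 * Λ₂ ^ 2 + 1) * U - Λ₁ ^ 2 - Λ₂ ^ 2) * X +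
        Λ₁ ^ 2 * Λ₂ ^ 2 * U ^ 2 * (U - 1) ^ 4) * ((ζ₂ - 1) * (Λ₂ ^ 2 * ζ₁ - ζ₂)) ^ 6
        = (X * ((ζ₂ - 1) * (Λ₂ ^ 2 * ζ₁ - ζ₂)) ^ 3) ^ 2 -
          (U * ((ζ₂ - 1) * (Λ₂ ^ 2 * ζ₁ - ζ₂))) *
            ((U * ((ζ₂ - 1) * (Λ₂ ^ 2 * ζ₁ - ζ₂))) - (ζ₂ - 1) * (Λ₂ ^ 2 * ζ₁ - ζ₂)) *
            ((Λ₁ ^ 2 * Λ₂ ^ 2 + 1) * (U * ((ζ₂ - 1) * (Λ₂ ^ 2 * ζ₁ - ζ₂))) -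
              (Λ₁ ^ 2 + Λ₂ ^ 2) * ((ζ₂ - 1) * (Λ₂ ^ 2 * ζ₁ - ζ₂))) *
            (X * ((ζ₂ - 1) * (Λ₂ ^ 2 * ζ₁ - ζ₂)) ^ 3) +
          Λ₁ ^ 2 * Λ₂ ^ 2 * (U * ((ζ₂ - 1) * (Λ₂ ^ 2 * ζ₁ - ζ₂))) ^ 2 *
            ((U * ((ζ₂ - 1) * (Λ₂ ^ 2 * ζ₁ - ζ₂))) - (ζ₂ - 1) * (Λ₂ ^ 2 * ζ₁ - ζ₂)) ^ 4 := by
          ring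
      _ = _ := by rw [hUc, hXc]; ring
  set i := p + q - r with hidef
  set j := 2 * r - p with hjdef
  set k := 3 * r - p - q with hkdef
  -- pairing lemmas
  have ezm : ∀ (z : ℂ), z ≠ 0 → ∀ (m : ℤ) (n e : ℕ), m + (n : ℤ) = (e : ℤ) →
      z ^ m * z ^ n = z ^ e := by
    intro z hz m n e h
    rw [← zpow_natCast z n, ← zpow_natCast z e, ← zpow_add₀ hz, h]
  have hYj : Y ^ (2 * r) * (((Λ₂ ^ 2 * ζ₁ - ζ₂) ^ 4 * (ζ₂ - 1) ^ 5)) ^ (2 * r)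
      = (Λ₂ ^ 2 * (Λ₂ ^ 2 - 1) ^ 3 * (ζ₁ - 1) ^ 2 * ζ₂ *
          (ζ₂ - Λ₂ ^ 2) * (ζ₁ - ζ₂) ^ 2 * η₁ * η₂) ^ (2 * r) := by
    rw [← mul_pow, hYc, Even.neg_pow (even_two_mul r)]
  have hUqr : U ^ (q + r) * ((ζ₂ - 1) * (Λ₂ ^ 2 * ζ₁ - ζ₂)) ^ (q + r)
      = ((ζ₂ - Λ₂ ^ 2) * (ζ₁ - ζ₂)) ^ (q + r) := by
    rw [← mul_pow, hUc]
  have hU2p : U ^ (2 * p) * ((ζ₂ - 1) * (Λ₂ ^ 2 * ζ₁ - ζ₂)) ^ (2 * p)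
      = ((ζ₂ - Λ₂ ^ 2) * (ζ₁ - ζ₂)) ^ (2 * p) := by
    rw [← mul_pow, hUc]
  have hU1q : (U - 1) ^ (2 * q) * ((ζ₂ - 1) * (Λ₂ ^ 2 * ζ₁ - ζ₂)) ^ (2 * q)
      = ((Λ₂ ^ 2 - 1) * ζ₂ * (ζ₁ - 1)) ^ (2 * q) := by
    rw [← mul_pow, hU1c, Even.neg_pow (even_two_mul q)]
  have hU1r : (U - 1) ^ (2 * r) * ((ζ₂ - 1) * (Λ₂ ^ 2 * ζ₁ - ζ₂)) ^ (2 * r)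
      = ((Λ₂ ^ 2 - 1) * ζ₂ * (ζ₁ - 1)) ^ (2 * r) := by
    rw [← mul_pow, hU1c, Even.neg_pow (even_two_mul r)]
  have hXj : X ^ i * ((ζ₂ - 1) * (Λ₂ ^ 2 * ζ₁ - ζ₂)) ^ (3 * i)
      = (Λ₂ ^ 2 * (Λ₂ ^ 2 - 1) ^ 2 * ζ₁ * ζ₂ * (ζ₁ - 1) ^ 2 *
          (ζ₂ - Λ₂ ^ 2) * (ζ₁ - ζ₂)) ^ i := by
    rw [pow_mul, ← mul_pow, hXc]
  have hQj : (X ^ 2 - U * (U - 1) * ((Λ₁ ^ 2 * Λ₂ ^ 2 + 1) * U - Λ₁ ^ 2 - Λ₂ ^ 2) * X +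
        Λ₁ ^ 2 * Λ₂ ^ 2 * U ^ 2 * (U - 1) ^ 4) ^ j *
        ((ζ₂ - 1) * (Λ₂ ^ 2 * ζ₁ - ζ₂)) ^ (6 * j)
      = (Λ₂ ^ 2 * (Λ₂ ^ 2 - 1) ^ 4 * ζ₂ ^ 2 * (ζ₁ - 1) ^ 3 * (ζ₂ - Λ₂ ^ 2) ^ 2 *
          (ζ₁ - ζ₂) ^ 3 * (ζ₁ - Λ₁ ^ 2) * (Λ₂ ^ 2 * ζ₁ - ζ₂)) ^ j := by
    rw [pow_mul, ← mul_pow, hQc]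
  clear hU0 hU1
  -- the common cancellation factor
  have hMW : Λ₂ ^ (2 * q) * (Λ₂ ^ 2 - 1) ^ (2 * r) * U ^ (q + r) * (U - 1) ^ (2 * q) *
      ((Λ₂ ^ 2 * ζ₁ - ζ₂) ^ 4 * (ζ₂ - 1) ^ 5) ^ (2 * r) *
      ((ζ₂ - 1) * (Λ₂ ^ 2 * ζ₁ - ζ₂)) ^ (q + r) *
      ((ζ₂ - 1) * (Λ₂ ^ 2 * ζ₁ - ζ₂)) ^ (2 * q) *
      ((ζ₂ - 1) * (Λ₂ ^ 2 * ζ₁ - ζ₂)) ^ (2 * p) *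
      ((ζ₂ - 1) * (Λ₂ ^ 2 * ζ₁ - ζ₂)) ^ (2 * r) *
      ((ζ₂ - 1) * (Λ₂ ^ 2 * ζ₁ - ζ₂)) ^ (3 * i) *
      ((ζ₂ - 1) * (Λ₂ ^ 2 * ζ₁ - ζ₂)) ^ (6 * j) ≠ 0 := by
    apply_rules [mul_ne_zero, pow_ne_zero]
  refine mul_right_cancel₀ hMW ?_
  have hLft : Y ^ (2 * r) *
      (Λ₂ ^ (2 * q) * (Λ₂ ^ 2 - 1) ^ (2 * r) * U ^ (q + r) * (U - 1) ^ (2 * q) *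
      ((Λ₂ ^ 2 * ζ₁ - ζ₂) ^ 4 * (ζ₂ - 1) ^ 5) ^ (2 * r) *
      ((ζ₂ - 1) * (Λ₂ ^ 2 * ζ₁ - ζ₂)) ^ (q + r) *
      ((ζ₂ - 1) * (Λ₂ ^ 2 * ζ₁ - ζ₂)) ^ (2 * q) *
      ((ζ₂ - 1) * (Λ₂ ^ 2 * ζ₁ - ζ₂)) ^ (2 * p) *
      ((ζ₂ - 1) * (Λ₂ ^ 2 * ζ₁ - ζ₂)) ^ (2 * r) *
      ((ζ₂ - 1) * (Λ₂ ^ 2 * ζ₁ - ζ₂)) ^ (3 * i) *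
      ((ζ₂ - 1) * (Λ₂ ^ 2 * ζ₁ - ζ₂)) ^ (6 * j))
      = Λ₂ ^ (4 * r + 2 * q) * (Λ₂ ^ 2 - 1) ^ (8 * r + 2 * q) * ζ₁ ^ i *
        ζ₂ ^ (2 * r + k + 2 * q) * (ζ₁ - 1) ^ (4 * r + j + 2 * q) *
        (ζ₂ - 1) ^ (3 * p + 2 * r + 3 * i + 6 * j) * (ζ₂ - Λ₂ ^ 2) ^ (3 * r + p + q) *
        (ζ₁ - ζ₂) ^ (5 * r + q) * (Λ₂ ^ 2 * ζ₁ - ζ₂) ^ (2 * p + 2 * r + 3 * i + 6 * j) *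
        (ζ₁ - Λ₁ ^ 2) ^ j := by
    calc Y ^ (2 * r) * (Λ₂ ^ (2 * q) * (Λ₂ ^ 2 - 1) ^ (2 * r) * U ^ (q + r) *
          (U - 1) ^ (2 * q) *
          ((Λ₂ ^ 2 * ζ₁ - ζ₂) ^ 4 * (ζ₂ - 1) ^ 5) ^ (2 * r) *
          ((ζ₂ - 1) * (Λ₂ ^ 2 * ζ₁ - ζ₂)) ^ (q + r) *
          ((ζ₂ - 1) * (Λ₂ ^ 2 * ζ₁ - ζ₂)) ^ (2 * q) *
          ((ζ₂ - 1) * (Λ₂ ^ 2 * ζ₁ - ζ₂)) ^ (2 * p) *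
          ((ζ₂ - 1) * (Λ₂ ^ 2 * ζ₁ - ζ₂)) ^ (2 * r) *
          ((ζ₂ - 1) * (Λ₂ ^ 2 * ζ₁ - ζ₂)) ^ (3 * i) *
          ((ζ₂ - 1) * (Λ₂ ^ 2 * ζ₁ - ζ₂)) ^ (6 * j))
        = (Y ^ (2 * r) * (((Λ₂ ^ 2 * ζ₁ - ζ₂) ^ 4 * (ζ₂ - 1) ^ 5)) ^ (2 * r)) *
          (U ^ (q + r) * ((ζ₂ - 1) * (Λ₂ ^ 2 * ζ₁ - ζ₂)) ^ (q + r)) *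
          ((U - 1) ^ (2 * q) * ((ζ₂ - 1) * (Λ₂ ^ 2 * ζ₁ - ζ₂)) ^ (2 * q)) *
          (Λ₂ ^ (2 * q) * (Λ₂ ^ 2 - 1) ^ (2 * r) *
            ((ζ₂ - 1) * (Λ₂ ^ 2 * ζ₁ - ζ₂)) ^ (2 * p) *
            ((ζ₂ - 1) * (Λ₂ ^ 2 * ζ₁ - ζ₂)) ^ (2 * r) *
            ((ζ₂ - 1) * (Λ₂ ^ 2 * ζ₁ - ζ₂)) ^ (3 * i) *
            ((ζ₂ - 1) * (Λ₂ ^ 2 * ζ₁ - ζ₂)) ^ (6 * j)) := by ring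
      _ = ((Λ₂ ^ 2 * (Λ₂ ^ 2 - 1) ^ 3 * (ζ₁ - 1) ^ 2 * ζ₂ *
            (ζ₂ - Λ₂ ^ 2) * (ζ₁ - ζ₂) ^ 2 * η₁ * η₂) ^ (2 * r)) *
          (((ζ₂ - Λ₂ ^ 2) * (ζ₁ - ζ₂)) ^ (q + r)) *
          (((Λ₂ ^ 2 - 1) * ζ₂ * (ζ₁ - 1)) ^ (2 * q)) *
          (Λ₂ ^ (2 * q) * (Λ₂ ^ 2 - 1) ^ (2 * r) *
            ((ζ₂ - 1) * (Λ₂ ^ 2 * ζ₁ - ζ₂)) ^ (2 * p) *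
            ((ζ₂ - 1) * (Λ₂ ^ 2 * ζ₁ - ζ₂)) ^ (2 * r) *
            ((ζ₂ - 1) * (Λ₂ ^ 2 * ζ₁ - ζ₂)) ^ (3 * i) *
            ((ζ₂ - 1) * (Λ₂ ^ 2 * ζ₁ - ζ₂)) ^ (6 * j)) := by
          rw [hYj, hUqr, hU1q]
      _ = _ := by
          simp only [mul_pow, ← pow_mul]
          rw [hcurve1, hcurve2]
          ring
  have hRt : (Λ₂ ^ (2 * ((r : ℤ) - (q : ℤ))) * (Λ₂ ^ 2 - 1) ^ (2 * ((p : ℤ) - (r : ℤ))) *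
      U ^ (2 * (p : ℤ) - (q : ℤ) - (r : ℤ)) * (U - 1) ^ (2 * ((r : ℤ) - (q : ℤ))) *
      X ^ i *
      (X ^ 2 - U * (U - 1) * ((Λ₁ ^ 2 * Λ₂ ^ 2 + 1) * U - Λ₁ ^ 2 - Λ₂ ^ 2) * X +
        Λ₁ ^ 2 * Λ₂ ^ 2 * U ^ 2 * (U - 1) ^ 4) ^ j) *
      (Λ₂ ^ (2 * q) * (Λ₂ ^ 2 - 1) ^ (2 * r) * U ^ (q + r) * (U - 1) ^ (2 * q) *
      ((Λ₂ ^ 2 * ζ₁ - ζ₂) ^ 4 * (ζ₂ - 1) ^ 5) ^ (2 * r) *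
      ((ζ₂ - 1) * (Λ₂ ^ 2 * ζ₁ - ζ₂)) ^ (q + r) *
      ((ζ₂ - 1) * (Λ₂ ^ 2 * ζ₁ - ζ₂)) ^ (2 * q) *
      ((ζ₂ - 1) * (Λ₂ ^ 2 * ζ₁ - ζ₂)) ^ (2 * p) *
      ((ζ₂ - 1) * (Λ₂ ^ 2 * ζ₁ - ζ₂)) ^ (2 * r) *
      ((ζ₂ - 1) * (Λ₂ ^ 2 * ζ₁ - ζ₂)) ^ (3 * i) *
      ((ζ₂ - 1) * (Λ₂ ^ 2 * ζ₁ - ζ₂)) ^ (6 * j))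
      = Λ₂ ^ (2 * r + 2 * i + 2 * j) * (Λ₂ ^ 2 - 1) ^ (2 * p + 2 * r + 2 * i + 4 * j) *
        ζ₁ ^ i * ζ₂ ^ (2 * r + i + 2 * j) * (ζ₁ - 1) ^ (2 * r + 2 * i + 3 * j) *
        (ζ₂ - 1) ^ (11 * r + 3 * q) * (ζ₂ - Λ₂ ^ 2) ^ (2 * p + i + 2 * j) *
        (ζ₁ - ζ₂) ^ (2 * p + i + 3 * j) * (Λ₂ ^ 2 * ζ₁ - ζ₂) ^ (9 * r + 3 * q + j) *
        (ζ₁ - Λ₁ ^ 2) ^ j := by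
    calc (Λ₂ ^ (2 * ((r : ℤ) - (q : ℤ))) * (Λ₂ ^ 2 - 1) ^ (2 * ((p : ℤ) - (r : ℤ))) *
        U ^ (2 * (p : ℤ) - (q : ℤ) - (r : ℤ)) * (U - 1) ^ (2 * ((r : ℤ) - (q : ℤ))) *
        X ^ i *
        (X ^ 2 - U * (U - 1) * ((Λ₁ ^ 2 * Λ₂ ^ 2 + 1) * U - Λ₁ ^ 2 - Λ₂ ^ 2) * X +
          Λ₁ ^ 2 * Λ₂ ^ 2 * U ^ 2 * (U - 1) ^ 4) ^ j) *
        (Λ₂ ^ (2 * q) * (Λ₂ ^ 2 - 1) ^ (2 * r) * U ^ (q + r) * (U - 1) ^ (2 * q) *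
        ((Λ₂ ^ 2 * ζ₁ - ζ₂) ^ 4 * (ζ₂ - 1) ^ 5) ^ (2 * r) *
        ((ζ₂ - 1) * (Λ₂ ^ 2 * ζ₁ - ζ₂)) ^ (q + r) *
        ((ζ₂ - 1) * (Λ₂ ^ 2 * ζ₁ - ζ₂)) ^ (2 * q) *
        ((ζ₂ - 1) * (Λ₂ ^ 2 * ζ₁ - ζ₂)) ^ (2 * p) *
        ((ζ₂ - 1) * (Λ₂ ^ 2 * ζ₁ - ζ₂)) ^ (2 * r) *
        ((ζ₂ - 1) * (Λ₂ ^ 2 * ζ₁ - ζ₂)) ^ (3 * i) *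
        ((ζ₂ - 1) * (Λ₂ ^ 2 * ζ₁ - ζ₂)) ^ (6 * j))
        = (Λ₂ ^ (2 * ((r : ℤ) - (q : ℤ))) * Λ₂ ^ (2 * q)) *
          ((Λ₂ ^ 2 - 1) ^ (2 * ((p : ℤ) - (r : ℤ))) * (Λ₂ ^ 2 - 1) ^ (2 * r)) *
          (U ^ (2 * (p : ℤ) - (q : ℤ) - (r : ℤ)) * U ^ (q + r)) *
          ((U - 1) ^ (2 * ((r : ℤ) - (q : ℤ))) * (U - 1) ^ (2 * q)) *
          (X ^ i * ((ζ₂ - 1) * (Λ₂ ^ 2 * ζ₁ - ζ₂)) ^ (3 * i)) *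
          ((X ^ 2 - U * (U - 1) * ((Λ₁ ^ 2 * Λ₂ ^ 2 + 1) * U - Λ₁ ^ 2 - Λ₂ ^ 2) * X +
            Λ₁ ^ 2 * Λ₂ ^ 2 * U ^ 2 * (U - 1) ^ 4) ^ j *
            ((ζ₂ - 1) * (Λ₂ ^ 2 * ζ₁ - ζ₂)) ^ (6 * j)) *
          (((Λ₂ ^ 2 * ζ₁ - ζ₂) ^ 4 * (ζ₂ - 1) ^ 5) ^ (2 * r) *
            ((ζ₂ - 1) * (Λ₂ ^ 2 * ζ₁ - ζ₂)) ^ (q + r) *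
            ((ζ₂ - 1) * (Λ₂ ^ 2 * ζ₁ - ζ₂)) ^ (2 * q) *
            ((ζ₂ - 1) * (Λ₂ ^ 2 * ζ₁ - ζ₂)) ^ (2 * p) *
            ((ζ₂ - 1) * (Λ₂ ^ 2 * ζ₁ - ζ₂)) ^ (2 * r)) := by ring
      _ = Λ₂ ^ (2 * r) * (Λ₂ ^ 2 - 1) ^ (2 * p) * U ^ (2 * p) * (U - 1) ^ (2 * r) *
          (X ^ i * ((ζ₂ - 1) * (Λ₂ ^ 2 * ζ₁ - ζ₂)) ^ (3 * i)) *
          ((X ^ 2 - U * (U - 1) * ((Λ₁ ^ 2 * Λ₂ ^ 2 + 1) * U - Λ₁ ^ 2 - Λ₂ ^ 2) * X +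
            Λ₁ ^ 2 * Λ₂ ^ 2 * U ^ 2 * (U - 1) ^ 4) ^ j *
            ((ζ₂ - 1) * (Λ₂ ^ 2 * ζ₁ - ζ₂)) ^ (6 * j)) *
          (((Λ₂ ^ 2 * ζ₁ - ζ₂) ^ 4 * (ζ₂ - 1) ^ 5) ^ (2 * r) *
            ((ζ₂ - 1) * (Λ₂ ^ 2 * ζ₁ - ζ₂)) ^ (q + r) *
            ((ζ₂ - 1) * (Λ₂ ^ 2 * ζ₁ - ζ₂)) ^ (2 * q) *
            ((ζ₂ - 1) * (Λ₂ ^ 2 * ζ₁ - ζ₂)) ^ (2 * p) *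
            ((ζ₂ - 1) * (Λ₂ ^ 2 * ζ₁ - ζ₂)) ^ (2 * r)) := by
          rw [ezm Λ₂ hΛ₂0 (2 * ((r : ℤ) - (q : ℤ))) (2 * q) (2 * r) (by push_cast; ring),
              ezm (Λ₂ ^ 2 - 1) h2 (2 * ((p : ℤ) - (r : ℤ))) (2 * r) (2 * p)
                (by push_cast; ring),
              ezm U hU0' (2 * (p : ℤ) - (q : ℤ) - (r : ℤ)) (q + r) (2 * p)
                (by push_cast; ring),
              ezm (U - 1) hU1' (2 * ((r : ℤ) - (q : ℤ))) (2 * q) (2 * r)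
                (by push_cast; ring)]
      _ = Λ₂ ^ (2 * r) * (Λ₂ ^ 2 - 1) ^ (2 * p) *
          (U ^ (2 * p) * ((ζ₂ - 1) * (Λ₂ ^ 2 * ζ₁ - ζ₂)) ^ (2 * p)) *
          ((U - 1) ^ (2 * r) * ((ζ₂ - 1) * (Λ₂ ^ 2 * ζ₁ - ζ₂)) ^ (2 * r)) *
          (X ^ i * ((ζ₂ - 1) * (Λ₂ ^ 2 * ζ₁ - ζ₂)) ^ (3 * i)) *
          ((X ^ 2 - U * (U - 1) * ((Λ₁ ^ 2 * Λ₂ ^ 2 + 1) * U - Λ₁ ^ 2 - Λ₂ ^ 2) * X +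
            Λ₁ ^ 2 * Λ₂ ^ 2 * U ^ 2 * (U - 1) ^ 4) ^ j *
            ((ζ₂ - 1) * (Λ₂ ^ 2 * ζ₁ - ζ₂)) ^ (6 * j)) *
          (((Λ₂ ^ 2 * ζ₁ - ζ₂) ^ 4 * (ζ₂ - 1) ^ 5) ^ (2 * r) *
            ((ζ₂ - 1) * (Λ₂ ^ 2 * ζ₁ - ζ₂)) ^ (q + r) *
            ((ζ₂ - 1) * (Λ₂ ^ 2 * ζ₁ - ζ₂)) ^ (2 * q)) := by ring
      _ = Λ₂ ^ (2 * r) * (Λ₂ ^ 2 - 1) ^ (2 * p) *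
          ((ζ₂ - Λ₂ ^ 2) * (ζ₁ - ζ₂)) ^ (2 * p) *
          ((Λ₂ ^ 2 - 1) * ζ₂ * (ζ₁ - 1)) ^ (2 * r) *
          (Λ₂ ^ 2 * (Λ₂ ^ 2 - 1) ^ 2 * ζ₁ * ζ₂ * (ζ₁ - 1) ^ 2 *
            (ζ₂ - Λ₂ ^ 2) * (ζ₁ - ζ₂)) ^ i *
          (Λ₂ ^ 2 * (Λ₂ ^ 2 - 1) ^ 4 * ζ₂ ^ 2 * (ζ₁ - 1) ^ 3 * (ζ₂ - Λ₂ ^ 2) ^ 2 *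
            (ζ₁ - ζ₂) ^ 3 * (ζ₁ - Λ₁ ^ 2) * (Λ₂ ^ 2 * ζ₁ - ζ₂)) ^ j *
          (((Λ₂ ^ 2 * ζ₁ - ζ₂) ^ 4 * (ζ₂ - 1) ^ 5) ^ (2 * r) *
            ((ζ₂ - 1) * (Λ₂ ^ 2 * ζ₁ - ζ₂)) ^ (q + r) *
            ((ζ₂ - 1) * (Λ₂ ^ 2 * ζ₁ - ζ₂)) ^ (2 * q)) := by
          rw [hU2p, hU1r, hXj, hQj]
      _ = _ := by
          simp only [mul_pow, ← pow_mul]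
          ring
  rw [hLft, hRt]
  rw [show 4 * r + 2 * q = 2 * r + 2 * i + 2 * j by omega,
      show 8 * r + 2 * q = 2 * p + 2 * r + 2 * i + 4 * j by omega,
      show 2 * r + k + 2 * q = 2 * r + i + 2 * j by omega,
      show 4 * r + j + 2 * q = 2 * r + 2 * i + 3 * j by omega,
      show 3 * p + 2 * r + 3 * i + 6 * j = 11 * r + 3 * q by omega,
      show 3 * r + p + q = 2 * p + i + 2 * j by omega,
      show 5 * r + q = 2 * p + i + 3 * j by omega,
      show 2 * p + 2 * r + 3 * i + 6 * j = 9 * r + 3 * q + j by omega]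
end

section
/- (Double cover of the twisted fibration) Let r, p, q be positive integers with 0 < p < 2r, r < p + q < 3r and p + q < 3r. Let a, b, z, X̃, Ỹ be complex numbers with a ≠ 0, b ≠ 0, z ≠ 0, and suppose Ỹ^{2r} = z^{p+q−r} · ((z−a)(z−1/a)(z−b)(z−1/b))^{2r−p} · 2^{4p} · X̃^{3r−p−q}(X̃−1)^{p}(X̃−z²)^{p}. Set x = X̃/z, y = Ỹ/(16z³), u = (1+z)²/(4z), A = (1+a)²/(4a), B = (1+b)²/(4b). Then y^{2r} = (u−A)^{2r−p}(u−B)^{2r−p} · x^{3r−p−q} · (x² + 2(1−2u)x + 1)^{p}. (All exponents p+q−r, 2r−p, 3r−p−q, p are positive integers, so all powers are ordinary integer powers in ℂ.) -/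
/-- The pencil over the `z`-line obtained by the degree-two base change
`u = (1+z)²/(4z)` pushes down to the twisted fibration of superelliptic curves
over the `u`-line. -/
theorem statement17 (r p q : ℕ) (hr : 0 < r) (hp0 : 0 < p) (hp : p < 2 * r)
    (hq0 : 0 < q) (hpq1 : r < p + q) (hpq2 : p + q < 3 * r)
    (a b z Xt Yt : ℂ) (ha : a ≠ 0) (hb : b ≠ 0) (hz : z ≠ 0)
    (hcurve : Yt ^ (2 * r) =
      z ^ (p + q - r) *
        ((z - a) * (z - 1 / a) * (z - b) * (z - 1 / b)) ^ (2 * r - p) *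
        2 ^ (4 * p) * (Xt ^ (3 * r - p - q) * (Xt - 1) ^ p * (Xt - z ^ 2) ^ p))
    (x y u A B : ℂ)
    (hx : x = Xt / z) (hy : y = Yt / (16 * z ^ 3))
    (hu : u = (1 + z) ^ 2 / (4 * z))
    (hA : A = (1 + a) ^ 2 / (4 * a)) (hB : B = (1 + b) ^ 2 / (4 * b)) :
    y ^ (2 * r) =
      (u - A) ^ (2 * r - p) * (u - B) ^ (2 * r - p) *
      x ^ (3 * r - p - q) * (x ^ 2 + 2 * (1 - 2 * u) * x + 1) ^ p := by
  set k1 := 2 * r - p with hk1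
  set k2 := 3 * r - p - q with hk2
  set k3 := p + q - r with hk3
  -- simplified forms of the factors
  have h1 : u - A = (z - a) * (z - 1 / a) / (4 * z) := by
    rw [hu, hA]; field_simp; ring
  have h2 : u - B = (z - b) * (z - 1 / b) / (4 * z) := by
    rw [hu, hB]; field_simp; ring
  have h3 : x ^ 2 + 2 * (1 - 2 * u) * x + 1 = (Xt - 1) * (Xt - z ^ 2) / z ^ 2 := by
    rw [hx, hu]; field_simp; ring
  have h2p : (2 : ℂ) ^ (4 * p) = 4 ^ (2 * p) := by
    rw [show (4 : ℂ) = 2 ^ 2 by norm_num, ← pow_mul]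
    congr 1; omega
  have h16 : ((16 : ℂ) * z ^ 3) ^ (2 * r)
      = 4 ^ (2 * k1 + 2 * p) * z ^ (k3 + k1 + k1 + k2 + 2 * p) := by
    rw [mul_pow, show (16 : ℂ) = 4 ^ 2 by norm_num, ← pow_mul, ← pow_mul]
    congr 1
    · congr 1; omega
    · congr 1; omega
  have hd1 : ((16 : ℂ) * z ^ 3) ^ (2 * r) ≠ 0 := by
    apply pow_ne_zero; exact mul_ne_zero (by norm_num) (pow_ne_zero _ hz)
  have hd2 : (4 * z) ^ k1 * (4 * z) ^ k1 * z ^ k2 * (z ^ 2) ^ p ≠ 0 := by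
    have h4z : (4 : ℂ) * z ≠ 0 := mul_ne_zero (by norm_num) hz
    exact mul_ne_zero (mul_ne_zero (mul_ne_zero (pow_ne_zero _ h4z)
      (pow_ne_zero _ h4z)) (pow_ne_zero _ hz)) (pow_ne_zero _ (pow_ne_zero _ hz))
  have hsplit : ((z - a) * (z - 1 / a) * (z - b) * (z - 1 / b)) ^ k1
      = ((z - a) * (z - 1 / a)) ^ k1 * ((z - b) * (z - 1 / b)) ^ k1 := by
    rw [← mul_pow]; congr 1; ring
  rw [hy, h1, h2, h3, hx, div_pow, div_pow, div_pow, div_pow, div_pow,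
    div_mul_div_comm, div_mul_div_comm, div_mul_div_comm,
    div_eq_div_iff hd1 hd2, hcurve, hsplit, h2p, h16, mul_pow (Xt - 1) (Xt - z ^ 2) p]
  ring
end
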